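/- arXiv:2008.06613 — 9 statements merged into one kernel-verified Lean document; each statement's English description precedes it below -/
import Mathlib

section
/- Let E be a Borel equivalence relation on a standard Borel space X and let Γ be a countably infinite group. Then the countable power E^ω is Borel reducible to the Γ-jump E^{[Γ]}. -/
/-!
Fix a labelling `ℓ : Γ → ℕ` and send `x : ℕ → X` to `x ∘ ℓ`. If for every `g ≠ 1` and every
`n` some `β` has `ℓ β = n` and `ℓ (g β) = 0`, this map is a reduction: `ℓ` is onto, which
handles the trivial shift, and a shift by `g ≠ 1` witnessing `x ∘ ℓ E^{[Γ]} y ∘ ℓ` gives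
`x n E y 0`, `x 0 E y 0` and `x 0 E y n`, hence `x n E y n`. Such a labelling of a countably
infinite group is built greedily: enumerate all pairs `(g, n)` and, at each stage, pick a fresh
point `β` with `g β` also fresh, labelling `β` by `n` and leaving `g β` (and everything never
picked) at `0`.
-/

/-- The Γ-jump of an equivalence relation `E` on `X`: the equivalence relation on `X^Γ`
defined by `x E^{[Γ]} y` iff there is `γ ∈ Γ` with `x(γ⁻¹α) E y(α)` for all `α ∈ Γ`. -/
def GammaJump (Γ : Type*) [Group Γ] {X : Type*} (E : X → X → Prop) :
    (Γ → X) → (Γ → X) → Prop :=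
  fun x y => ∃ γ : Γ, ∀ α : Γ, E (x (γ⁻¹ * α)) (y α)

/-- Borel reducibility of binary relations on measurable spaces. -/
def BorelReducible {X Y : Type*} [MeasurableSpace X] [MeasurableSpace Y]
    (E : X → X → Prop) (F : Y → Y → Prop) : Prop :=
  ∃ f : X → Y, Measurable f ∧ ∀ x x', E x x' ↔ F (f x) (f x')

open Function

section Greedy

variable {G : Type*} [Group G] [Infinite G]

lemma exists_notMem_and_mul_notMem (s : Finset G) (g : G) : ∃ x, x ∉ s ∧ g * x ∉ s := by
  classical
  obtain ⟨x, hx⟩ := Infinite.exists_notMem_finset (s ∪ s.image (g⁻¹ * ·))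
  refine ⟨x, fun h => hx (Finset.mem_union_left _ h), fun h => hx ?_⟩
  exact Finset.mem_union_right _ (Finset.mem_image.mpr ⟨g * x, h, inv_mul_cancel_left g x⟩)

noncomputable def freshPoint (s : Finset G) (g : G) : G :=
  (exists_notMem_and_mul_notMem s g).choose

variable (g : ℕ → G)

open Classical in
noncomputable def greedyUsed : ℕ → Finset G
  | 0 => ∅
  | k + 1 =>
    greedyUsed k ∪ {freshPoint (greedyUsed k) (g k), g k * freshPoint (greedyUsed k) (g k)}

noncomputable def greedyPoint (k : ℕ) : G := freshPoint (greedyUsed g k) (g k)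

lemma greedyPoint_notMem (k : ℕ) : greedyPoint g k ∉ greedyUsed g k :=
  (exists_notMem_and_mul_notMem _ _).choose_spec.1

lemma mul_greedyPoint_notMem (k : ℕ) : g k * greedyPoint g k ∉ greedyUsed g k :=
  (exists_notMem_and_mul_notMem _ _).choose_spec.2

lemma greedyPoint_mem_greedyUsed_succ (k : ℕ) :
    greedyPoint g k ∈ greedyUsed g (k + 1) ∧ g k * greedyPoint g k ∈ greedyUsed g (k + 1) := by
  simp [greedyUsed, greedyPoint]

lemma greedyUsed_mono : Monotone (greedyUsed g) :=
  monotone_nat_of_le_succ fun k x hx => by simp [greedyUsed, hx]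

lemma greedyPoint_mem_greedyUsed {j k : ℕ} (h : j < k) :
    greedyPoint g j ∈ greedyUsed g k ∧ g j * greedyPoint g j ∈ greedyUsed g k :=
  (greedyPoint_mem_greedyUsed_succ g j).imp (greedyUsed_mono g h ·) (greedyUsed_mono g h ·)

lemma greedyPoint_injective : Injective (greedyPoint g) := by
  refine .of_lt_imp_ne fun j k h hjk => ?_
  exact greedyPoint_notMem g k (hjk ▸ (greedyPoint_mem_greedyUsed g h).1)

lemma mul_greedyPoint_ne {k : ℕ} (hk : g k ≠ 1) (j : ℕ) :
    g k * greedyPoint g k ≠ greedyPoint g j := by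
  intro hkj
  rcases lt_trichotomy j k with h | rfl | h
  · exact mul_greedyPoint_notMem g k (hkj ▸ (greedyPoint_mem_greedyUsed g h).1)
  · exact hk (mul_eq_right.mp hkj)
  · exact greedyPoint_notMem g j (hkj ▸ (greedyPoint_mem_greedyUsed g h).2)

end Greedy

theorem exists_labelling_of_infinite (G : Type*) [Group G] [Countable G] [Infinite G] :
    ∃ ℓ : G → ℕ, ∀ g ≠ 1, ∀ n, ∃ β, ℓ β = n ∧ ℓ (g * β) = 0 := by
  obtain ⟨p, hp⟩ := exists_surjective_nat (G × ℕ)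
  have hinj := greedyPoint_injective fun k => (p k).1
  refine ⟨extend (greedyPoint fun k => (p k).1) (fun k => (p k).2) 0, fun g hg n => ?_⟩
  obtain ⟨k, hk⟩ := hp (g, n)
  refine ⟨greedyPoint _ k, by rw [hinj.extend_apply, hk], extend_apply' _ _ _ ?_⟩
  rintro ⟨j, hj⟩
  refine mul_greedyPoint_ne (fun k => (p k).1) (k := k) (by simpa [hk]) j ?_
  simpa [hk] using hj.symm

theorem gammaJump_comp_iff {X : Type*} {E : X → X → Prop} (hE : Equivalence E)
    {Γ : Type*} [Group Γ] [Nontrivial Γ] {ℓ : Γ → ℕ}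
    (hℓ : ∀ g ≠ 1, ∀ n, ∃ β, ℓ β = n ∧ ℓ (g * β) = 0) (x y : ℕ → X) :
    GammaJump Γ E (x ∘ ℓ) (y ∘ ℓ) ↔ ∀ n, E (x n) (y n) := by
  refine ⟨fun ⟨g, hg⟩ n => ?_, fun h => ⟨1, fun α => by simpa using h (ℓ α)⟩⟩
  have shift (β : Γ) : E (x (ℓ β)) (y (ℓ (g * β))) := by simpa using hg (g * β)
  by_cases hg1 : g = 1
  · subst hg1
    obtain ⟨g', hg'⟩ := exists_ne (1 : Γ)
    obtain ⟨β, hβ, -⟩ := hℓ g' hg' n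
    simpa [hβ] using shift β
  obtain ⟨β₀, hβ₀, hgβ₀⟩ := hℓ g hg1 0
  obtain ⟨β₁, hβ₁, hgβ₁⟩ := hℓ g hg1 n
  obtain ⟨β₂, hβ₂, hgβ₂⟩ := hℓ g⁻¹ (inv_ne_one.mpr hg1) n
  have h₀ : E (x 0) (y 0) := by simpa [hβ₀, hgβ₀] using shift β₀
  have h₁ : E (x n) (y 0) := by simpa [hβ₁, hgβ₁] using shift β₁
  have h₂ : E (x 0) (y n) := by simpa [hβ₂, hgβ₂] using shift (g⁻¹ * β₂)
  exact hE.trans (hE.trans h₁ (hE.symm h₀)) h₂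

theorem omegaPower_borelReducible_gammaJump_general
    {X : Type*} [MeasurableSpace X]
    (E : X → X → Prop) (hE : Equivalence E)
    (Γ : Type*) [Group Γ] [Countable Γ] [Infinite Γ] :
    BorelReducible (fun x y : ℕ → X => ∀ n, E (x n) (y n)) (GammaJump Γ E) := by
  obtain ⟨ℓ, hℓ⟩ := exists_labelling_of_infinite Γ
  exact ⟨(· ∘ ℓ), by fun_prop, fun x y => (gammaJump_comp_iff hE hℓ x y).symm⟩

/-- For a Borel equivalence relation `E` on a standard Borel space `X`
and a countably infinite group `Γ`, the countable power `E^ω` is Borel reducible to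
the Γ-jump `E^{[Γ]}`. -/
theorem omegaPower_borelReducible_gammaJump
    {X : Type*} [MeasurableSpace X] [StandardBorelSpace X]
    (E : X → X → Prop) (hE : Equivalence E)
    (hEBorel : MeasurableSet {p : X × X | E p.1 p.2})
    (Γ : Type*) [Group Γ] [Countable Γ] [Infinite Γ] :
    BorelReducible (fun x y : ℕ → X => ∀ n, E (x n) (y n)) (GammaJump Γ E) :=
  omegaPower_borelReducible_gammaJump_general E hE Γ
end

section
/- Let E be an equivalence relation on a standard Borel space X, let Γ be a countable group, and let Λ be a quotient of Γ, i.e., there is a surjective group homomorphism π : Γ → Λ. Then E^{[Λ]} is Borel reducible to E^{[Γ]}. -/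
/-- If `Λ` is a quotient of the countable group `Γ` (via a surjective
homomorphism `π : Γ → Λ`), then `E^{[Λ]}` is Borel reducible to `E^{[Γ]}`. -/
theorem gammaJump_quotient_borelReducible
    {X : Type*} [MeasurableSpace X] [StandardBorelSpace X]
    (E : X → X → Prop) (hE : Equivalence E)
    {Γ Λ : Type*} [Group Γ] [Countable Γ] [Group Λ]
    (π : Γ →* Λ) (hπ : Function.Surjective π) :
    BorelReducible (GammaJump Λ E) (GammaJump Γ E) := by
  refine ⟨fun x => x ∘ π, ?_, ?_⟩
  · exact measurable_pi_iff.mpr fun γ => measurable_pi_apply (π γ)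
  · intro x x'
    constructor
    · rintro ⟨lam, h⟩
      obtain ⟨γ, rfl⟩ := hπ lam
      exact ⟨γ, fun α => by simpa using h (π α)⟩
    · rintro ⟨γ, h⟩
      refine ⟨π γ, fun β => ?_⟩
      obtain ⟨α, rfl⟩ := hπ β
      simpa using h α
end

section
/- Let E be an equivalence relation on a nonempty standard Borel space X, let Γ be a countable group, and let Λ be a subgroup of Γ. Then E^{[Λ]} is Borel reducible to E^{[Γ]}. -/
/-- If `Λ` is a subgroup of the countable group `Γ`, then `E^{[Λ]}` is
Borel reducible to `E^{[Γ]}` (for `E` an equivalence relation on a nonempty standard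
Borel space `X`). -/
theorem gammaJump_subgroup_borelReducible
    {X : Type*} [MeasurableSpace X] [StandardBorelSpace X] [Nonempty X]
    (E : X → X → Prop) (hE : Equivalence E)
    {Γ : Type*} [Group Γ] [Countable Γ] (Λ : Subgroup Γ) :
    BorelReducible (GammaJump Λ E) (GammaJump Γ E) := by
  classical
  obtain ⟨x₀⟩ := ‹Nonempty X›
  refine ⟨fun x g => if h : g ∈ Λ then x ⟨g, h⟩ else x₀, ?_, ?_⟩
  · apply measurable_pi_lambda
    intro g
    by_cases h : g ∈ Λ
    · simpa [h] using measurable_pi_apply (⟨g, h⟩ : Λ)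
    · simpa [h] using measurable_const
  · intro x y
    constructor
    · rintro ⟨l, hl⟩
      refine ⟨(l : Γ), fun g => ?_⟩
      by_cases h : g ∈ Λ
      · have h' : (l : Γ)⁻¹ * g ∈ Λ := Λ.mul_mem (Λ.inv_mem l.2) h
        simp only [h', h, dif_pos]
        have := hl ⟨g, h⟩
        have heq : (⟨(l : Γ)⁻¹ * g, h'⟩ : Λ) = l⁻¹ * ⟨g, h⟩ := by
          ext; simp
        rw [heq]
        exact this
      · have h' : (l : Γ)⁻¹ * g ∉ Λ := by
          intro hc
          exact h (by simpa using Λ.mul_mem l.2 hc)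
        simp [h, h', hE.refl x₀]
    · rintro ⟨γ, hγ⟩
      by_cases hγΛ : γ ∈ Λ
      · refine ⟨⟨γ, hγΛ⟩, fun α => ?_⟩
        have := hγ (α : Γ)
        have hα : (α : Γ) ∈ Λ := α.2
        have h' : γ⁻¹ * (α : Γ) ∈ Λ := Λ.mul_mem (Λ.inv_mem hγΛ) hα
        simp only [hα, h', dif_pos] at this
        have heq : (⟨γ⁻¹ * (α : Γ), h'⟩ : Λ) = (⟨γ, hγΛ⟩ : Λ)⁻¹ * α := by
          ext; simp
        rwa [heq] at this
      · refine ⟨1, fun α => ?_⟩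
        have hα : (α : Γ) ∈ Λ := α.2
        have h1' : γ⁻¹ * (α : Γ) ∉ Λ := by
          intro hc
          exact hγΛ (by simpa using Λ.mul_mem hα (Λ.inv_mem hc))
        have h2m : γ * (α : Γ) ∉ Λ := by
          intro hc
          exact hγΛ (by simpa using Λ.mul_mem hc (Λ.inv_mem hα))
        have h1 := hγ (α : Γ)
        have h2 := hγ (γ * (α : Γ))
        dsimp only at h1 h2
        rw [dif_neg h1', dif_pos hα] at h1
        rw [inv_mul_cancel_left, dif_pos hα, dif_neg h2m] at h2
        simp only [Subtype.coe_eta] at h1 h2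
        have heq : (1 : Λ)⁻¹ * α = α := by simp
        rw [heq]
        exact hE.trans h2 h1
end

section
/- Let E be a Borel equivalence relation on a standard Borel space with at least two equivalence classes. Then the ℤ-jump E^{[ℤ]} is weakly absorbing: E^{[ℤ]} has perfectly many classes, and ((E^{[ℤ]})^{<ω})^+ is Borel reducible to (E^{[ℤ]})^+. -/
/-- The Friedman–Stanley jump `E⁺` on `X^ω`: two sequences are equivalent iff they
enumerate the same set of `E`-classes. -/
def FSJump {X : Type*} (E : X → X → Prop) : (ℕ → X) → (ℕ → X) → Prop :=
  fun x y => Set.range (fun n => {z | E (x n) z}) = Set.range (fun n => {z | E (y n) z})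

/-- `E^{<ω}`: the equivalence relation on finite sequences from `X`, where two finite
sequences are equivalent iff they have the same length and are coordinatewise
`E`-equivalent. -/
def FinSeqRel {X : Type*} (E : X → X → Prop) :
    (Σ n : ℕ, Fin n → X) → (Σ n : ℕ, Fin n → X) → Prop :=
  fun x y => ∃ h : x.1 = y.1, ∀ i : Fin x.1, E (x.2 i) (y.2 (Fin.cast h i))

/-- `E` has perfectly many classes: there is a Borel injection of `2^ω` into `X` with
pairwise `E`-inequivalent values. -/
def PerfectlyManyClasses {X : Type*} [MeasurableSpace X] (E : X → X → Prop) : Prop :=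
  ∃ f : (ℕ → Bool) → X, Measurable f ∧ Function.Injective f ∧
    ∀ a b, a ≠ b → ¬ E (f a) (f b)

/-!
Fix `a`, `b` with `¬ E a b`. A sequence `z : ℕ → X` is coded by the bi-infinite sequence
`… a a b z₀ z₁ …` with the `b` at the origin. Any nontrivial translate of such a code sets an `a`
against the `b` of the other code, so two codes are `E^{[ℤ]}`-equivalent iff they are pointwise
`E`-equivalent. Coding `2^ω` this way gives perfectly many classes.

For the reduction, a tuple `(x₀, …, x_{k-1})` together with translates `(γ₀, …, γ_{k-1})` is
coded by its length in unary followed by an enumeration of the translated entries `γᵢ · xᵢ`.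
A sequence of tuples goes to the sequence of codes of all its members under all (countably many)
choices of translates. If two tuples are `(E^{[ℤ]})^{<ω}`-equivalent, each code of one is
pointwise equivalent to a code of the other under suitable translates; conversely, pointwise
equivalent codes come from `(E^{[ℤ]})^{<ω}`-equivalent tuples. Hence the two sets of
`E^{[ℤ]}`-classes coincide exactly when the two sets of `(E^{[ℤ]})^{<ω}`-classes do.
-/

open Multiplicative

section

variable {X Y Z : Type*}

theorem Equivalence.setOf_eq_setOf_iff {F : Y → Y → Prop} (hF : Equivalence F) {u v : Y} :
    {z | F u z} = {z | F v z} ↔ F u v := by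
  refine ⟨fun h => ?_, fun h => Set.ext fun z => ⟨hF.trans (hF.symm h), hF.trans h⟩⟩
  have hv : v ∈ {z | F v z} := hF.refl v
  rwa [← h] at hv

theorem fsJump_iff {F : Y → Y → Prop} (hF : Equivalence F) {x y : ℕ → Y} :
    FSJump F x y ↔ (∀ n, ∃ m, F (x n) (y m)) ∧ ∀ m, ∃ n, F (y m) (x n) := by
  simp only [FSJump, Set.Subset.antisymm_iff, Set.range_subset_iff, Set.mem_range,
    hF.setOf_eq_setOf_iff]
  constructor <;> rintro ⟨h₁, h₂⟩ <;>
    exact ⟨fun n => (h₁ n).imp fun _ => hF.symm, fun m => (h₂ m).imp fun _ => hF.symm⟩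

theorem measurable_sigma {ι : Type*} {β : ι → Type*} [∀ i, MeasurableSpace (β i)]
    [MeasurableSpace Y] {f : (Σ i, β i) → Y} (hf : ∀ i, Measurable fun u => f ⟨i, u⟩) :
    Measurable f :=
  fun _ hs => MeasurableSpace.measurableSet_iInf.2 fun i => hf i hs

theorem measurable_sigmaMk {ι : Type*} {β : ι → Type*} [∀ i, MeasurableSpace (β i)] (i : ι) :
    Measurable (Sigma.mk i : β i → Σ i, β i) :=
  fun _ hs => MeasurableSpace.measurableSet_iInf.1 hs i

/-- The reduction sends `w` to an enumeration of all `c l (w n)`. -/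
theorem borelReducible_fsJump [MeasurableSpace Y] [MeasurableSpace Z] {L : Type*}
    [Countable L] [Nonempty L] {F : Y → Y → Prop} {G : Z → Z → Prop}
    (hF : Equivalence F) (hG : Equivalence G) (c : L → Y → Z) (hc : ∀ l, Measurable (c l))
    (forward : ∀ y y', F y y' → ∀ l, ∃ l', G (c l y) (c l' y'))
    (backward : ∀ y y' l l', G (c l y) (c l' y') → F y y') :
    BorelReducible (FSJump F) (FSJump G) := by
  obtain ⟨e, he⟩ := exists_surjective_nat L
  set f : (ℕ → Y) → ℕ → Z := fun w N => c (e N.unpair.2) (w N.unpair.1)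
  have key : ∀ w w', (∀ n, ∃ m, F (w n) (w' m)) ↔ ∀ N, ∃ M, G (f w N) (f w' M) := by
    refine fun w w' => ⟨fun h N => ?_, fun h n => ?_⟩
    · obtain ⟨m, hm⟩ := h N.unpair.1
      obtain ⟨l', hl'⟩ := forward _ _ hm (e N.unpair.2)
      obtain ⟨k, rfl⟩ := he l'
      exact ⟨Nat.pair m k, by simpa [f] using hl'⟩
    · obtain ⟨M, hM⟩ := h (Nat.pair n 0)
      exact ⟨M.unpair.1, backward _ _ _ _ (by simpa [f] using hM)⟩
  refine ⟨f, measurable_pi_lambda _ fun N => (hc _).comp (measurable_pi_apply _), fun w w' => ?_⟩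
  rw [fsJump_iff hF, fsJump_iff hG]
  exact and_congr (key w w') (key w' w)

section Jumps

variable {E : X → X → Prop}

theorem equivalence_gammaJump {Γ : Type*} [Group Γ] (hE : Equivalence E) :
    Equivalence (GammaJump Γ E) where
  refl x := ⟨1, fun α => by simpa using hE.refl (x α)⟩
  symm := by
    rintro x y ⟨γ, h⟩
    exact ⟨γ⁻¹, fun α => by simpa using hE.symm (h (γ * α))⟩
  trans := by
    rintro x y z ⟨γ, h⟩ ⟨δ, h'⟩
    exact ⟨δ * γ, fun α => by simpa [mul_assoc] using hE.trans (h (δ⁻¹ * α)) (h' α)⟩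

theorem equivalence_finSeqRel (hE : Equivalence E) : Equivalence (FinSeqRel E) where
  refl _ := ⟨rfl, fun _ => hE.refl _⟩
  symm := by
    rintro ⟨k, u⟩ ⟨k', v⟩ ⟨hk, h⟩
    cases hk
    exact ⟨rfl, fun i => hE.symm (h i)⟩
  trans := by
    rintro ⟨k, u⟩ ⟨k', v⟩ ⟨k'', w⟩ ⟨hk, h⟩ ⟨hk', h'⟩
    cases hk; cases hk'
    exact ⟨rfl, fun i => hE.trans (h i) (h' i)⟩

end Jumps

section Tuples

variable {Γ : Type*} [Group Γ] {E : X → X → Prop}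

def PiRel (Γ : Type*) (E : X → X → Prop) (x y : Γ → X) : Prop :=
  ∀ α, E (x α) (y α)

def shiftTuple (l : List Γ) : (Σ k : ℕ, Fin k → Γ → X) → Σ k : ℕ, Fin k → Γ → X
  | ⟨k, u⟩ => ⟨k, fun i α => u i (l.getD i 1 * α)⟩

theorem measurable_shiftTuple [MeasurableSpace X] (l : List Γ) :
    Measurable (shiftTuple l : (Σ k : ℕ, Fin k → Γ → X) → Σ k : ℕ, Fin k → Γ → X) :=
  measurable_sigma fun k => (measurable_sigmaMk k).comp (by fun_prop)

theorem FinSeqRel.exists_shiftTuple {t t' : Σ k : ℕ, Fin k → Γ → X}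
    (h : FinSeqRel (GammaJump Γ E) t t') (l : List Γ) :
    ∃ l', FinSeqRel (PiRel Γ E) (shiftTuple l t) (shiftTuple l' t') := by
  obtain ⟨k, u⟩ := t
  obtain ⟨k', v⟩ := t'
  obtain ⟨hk, h⟩ := h
  cases hk
  choose γ hγ using h
  set l' := List.ofFn fun i => γ i * l.getD i 1
  refine ⟨l', rfl, fun (i : Fin k) α => ?_⟩
  have hl' : l'.getD i 1 = γ i * l.getD i 1 := by simp [l', List.getD_eq_getElem?_getD, i.isLt]
  have h := hγ i (γ i * (l.getD i 1 * α))
  rw [inv_mul_cancel_left] at h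
  change E (u i (l.getD i 1 * α)) (v i (l'.getD i 1 * α))
  rwa [hl', mul_assoc]

theorem finSeqRel_of_shiftTuple {t t' : Σ k : ℕ, Fin k → Γ → X} {l l' : List Γ}
    (h : FinSeqRel (PiRel Γ E) (shiftTuple l t) (shiftTuple l' t')) :
    FinSeqRel (GammaJump Γ E) t t' := by
  obtain ⟨k, u⟩ := t
  obtain ⟨k', v⟩ := t'
  obtain ⟨hk, h⟩ := h
  cases hk
  refine ⟨rfl, fun i => ⟨l'.getD i 1 * (l.getD i 1)⁻¹, fun α => ?_⟩⟩
  simpa [shiftTuple, mul_assoc] using h i ((l'.getD i 1)⁻¹ * α)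

end Tuples

section Anchor

variable {E : X → X → Prop} {a b : X}

def anchor (a b : X) (z : ℕ → X) (α : Multiplicative ℤ) : X :=
  match toAdd α with
  | .ofNat 0 => b
  | .ofNat (j + 1) => z j
  | .negSucc _ => a

@[simp]
theorem anchor_one (z : ℕ → X) : anchor a b z 1 = b := rfl

@[simp]
theorem anchor_ofAdd_succ (z : ℕ → X) (j : ℕ) : anchor a b z (ofAdd (j + 1 : ℕ)) = z j := rfl

theorem anchor_of_toAdd_neg (z : ℕ → X) {α : Multiplicative ℤ} (hα : toAdd α < 0) :
    anchor a b z α = a := by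
  obtain ⟨n, hn⟩ := Int.eq_negSucc_of_lt_zero hα
  rw [anchor, hn]

theorem gammaJump_anchor_iff (hE : Equivalence E) (hab : ¬ E a b) {z z' : ℕ → X} :
    GammaJump (Multiplicative ℤ) E (anchor a b z) (anchor a b z') ↔ ∀ j, E (z j) (z' j) := by
  refine ⟨fun ⟨γ, h⟩ j => ?_, fun h => ⟨1, fun α => ?_⟩⟩
  · obtain rfl : γ = 1 := by
      rcases lt_trichotomy (toAdd γ) 0 with hγ | hγ | hγ
      · have := h γ
        rw [inv_mul_cancel, anchor_one, anchor_of_toAdd_neg z' hγ] at this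
        exact absurd (hE.symm this) hab
      · exact toAdd.injective hγ
      · have := h 1
        rw [mul_one, anchor_one, anchor_of_toAdd_neg z (by simpa using hγ)] at this
        exact absurd this hab
    simpa only [inv_one, one_mul, anchor_ofAdd_succ] using h (ofAdd (j + 1 : ℕ))
  · rw [inv_one, one_mul]
    unfold anchor
    split
    exacts [hE.refl b, h _, hE.refl a]

theorem measurable_anchor [MeasurableSpace X] :
    Measurable (anchor a b : (ℕ → X) → Multiplicative ℤ → X) := by
  refine measurable_pi_lambda _ fun α => ?_
  unfold anchor
  split
  exacts [measurable_const, measurable_pi_apply _, measurable_const]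

theorem perfectlyManyClasses_zJump [MeasurableSpace X] (hE : Equivalence E) (hab : ¬ E a b) :
    PerfectlyManyClasses (GammaJump (Multiplicative ℤ) E) := by
  set f : (ℕ → Bool) → Multiplicative ℤ → X := fun s => anchor a b fun j => bif s j then b else a
  have hf : ∀ s t, s ≠ t → ¬ GammaJump (Multiplicative ℤ) E (f s) (f t) := by
    intro s t hst h
    rw [gammaJump_anchor_iff hE hab] at h
    refine hst (funext fun j => ?_)
    have hj := h j
    cases hs : s j <;> cases ht : t j <;> rw [hs, ht] at hj <;>
      first | rfl | exact absurd hj hab | exact absurd (hE.symm hj) hab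
  refine ⟨f, measurable_anchor.comp ?_, fun s t hst => ?_, hf⟩
  · exact measurable_pi_lambda _ fun j =>
      (measurable_of_countable fun c : Bool => bif c then b else a).comp (measurable_pi_apply j)
  · by_contra hne
    exact hf s t hne (hst ▸ (equivalence_gammaJump hE).refl (f s))

end Anchor

section TupleCode

variable {Γ : Type*} [Encodable Γ] {E : X → X → Prop} {a b : X}

def tupleCode (a b : X) : (Σ k : ℕ, Fin k → Γ → X) → ℕ → X
  | ⟨k, u⟩, j => if j < k then b else if j = k then a
      else (Encodable.decode (α := Fin k × Γ) (j - k - 1)).elim a fun p => u p.1 p.2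

theorem tupleCode_of_lt {k : ℕ} (u : Fin k → Γ → X) {j : ℕ} (hj : j < k) :
    tupleCode a b ⟨k, u⟩ j = b := if_pos hj

theorem tupleCode_length {k : ℕ} (u : Fin k → Γ → X) : tupleCode a b ⟨k, u⟩ k = a := by
  simp [tupleCode]

theorem tupleCode_encode {k : ℕ} (u : Fin k → Γ → X) (i : Fin k) (γ : Γ) :
    tupleCode a b ⟨k, u⟩ (Encodable.encode (i, γ) + k + 1) = u i γ := by
  have hj : Encodable.encode (i, γ) + k + 1 - k - 1 = Encodable.encode (i, γ) := by omega
  rw [tupleCode, if_neg (by omega), if_neg (by omega), hj, Encodable.encodek]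
  rfl

theorem forall_tupleCode_rel_iff (hE : Equivalence E) (hab : ¬ E a b)
    {t t' : Σ k : ℕ, Fin k → Γ → X} :
    (∀ j, E (tupleCode a b t j) (tupleCode a b t' j)) ↔ FinSeqRel (PiRel Γ E) t t' := by
  obtain ⟨k, u⟩ := t
  obtain ⟨k', v⟩ := t'
  refine ⟨fun h => ?_, fun ⟨hk, h⟩ j => ?_⟩
  · obtain rfl : k = k' := by
      by_contra hk
      rcases Nat.lt_or_gt_of_ne hk with hlt | hlt
      · have := h k
        rw [tupleCode_length u, tupleCode_of_lt v hlt] at this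
        exact hab this
      · have := h k'
        rw [tupleCode_length v, tupleCode_of_lt u hlt] at this
        exact hab (hE.symm this)
    refine ⟨rfl, fun i γ => ?_⟩
    have := h (Encodable.encode (i, γ) + k + 1)
    rwa [tupleCode_encode u, tupleCode_encode v] at this
  · cases hk
    dsimp only [tupleCode]
    split_ifs
    · exact hE.refl b
    · exact hE.refl a
    · cases Encodable.decode (α := Fin k × Γ) (j - k - 1) with
      | none => exact hE.refl a
      | some p => exact h p.1 p.2

theorem measurable_tupleCode [MeasurableSpace X] :
    Measurable (tupleCode a b : (Σ k : ℕ, Fin k → Γ → X) → ℕ → X) := by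
  refine measurable_sigma fun k => measurable_pi_lambda _ fun j => ?_
  simp only [tupleCode]
  by_cases hlt : j < k
  · simp only [hlt, if_true]
    exact measurable_const
  by_cases hk : j = k
  · simp only [hk, if_true]
    exact measurable_const
  simp only [hlt, hk, if_false]
  cases Encodable.decode (α := Fin k × Γ) (j - k - 1) with
  | none => exact measurable_const
  | some p => exact (measurable_pi_apply _).comp (measurable_pi_apply p.1)

end TupleCode

instance : Encodable (Multiplicative ℤ) := Encodable.ofEquiv ℤ toAdd

theorem borelReducible_fsJump_finSeqRel_zJump [MeasurableSpace X] {E : X → X → Prop} {a b : X}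
    (hE : Equivalence E) (hab : ¬ E a b) :
    BorelReducible (FSJump (FinSeqRel (GammaJump (Multiplicative ℤ) E)))
      (FSJump (GammaJump (Multiplicative ℤ) E)) := by
  set c : List (Multiplicative ℤ) → (Σ k : ℕ, Fin k → Multiplicative ℤ → X) →
      Multiplicative ℤ → X := fun l t => anchor a b (tupleCode a b (shiftTuple l t))
  have hc : ∀ l l' t t', GammaJump (Multiplicative ℤ) E (c l t) (c l' t') ↔
      FinSeqRel (PiRel (Multiplicative ℤ) E) (shiftTuple l t) (shiftTuple l' t') :=
    fun _ _ _ _ => (gammaJump_anchor_iff hE hab).trans (forall_tupleCode_rel_iff hE hab)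
  refine borelReducible_fsJump (equivalence_finSeqRel (equivalence_gammaJump hE))
    (equivalence_gammaJump hE) c
    (fun l => measurable_anchor.comp (measurable_tupleCode.comp (measurable_shiftTuple l)))
    (fun t t' h l => ?_) (fun t t' l l' h => finSeqRel_of_shiftTuple ((hc l l' t t').1 h))
  obtain ⟨l', hl'⟩ := h.exists_shiftTuple l
  exact ⟨l', (hc l l' t t').2 hl'⟩

end

theorem zJump_weakly_absorbing_general
    {X : Type*} [MeasurableSpace X]
    (E : X → X → Prop) (hE : Equivalence E)
    (htwo : ∃ a b : X, ¬ E a b) :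
    PerfectlyManyClasses (GammaJump (Multiplicative ℤ) E) ∧
    BorelReducible (FSJump (FinSeqRel (GammaJump (Multiplicative ℤ) E)))
      (FSJump (GammaJump (Multiplicative ℤ) E)) := by
  obtain ⟨a, b, hab⟩ := htwo
  exact ⟨perfectlyManyClasses_zJump hE hab, borelReducible_fsJump_finSeqRel_zJump hE hab⟩

/-- For a Borel equivalence relation `E` with at least two classes, the
ℤ-jump `E^{[ℤ]}` is weakly absorbing: it has perfectly many classes, and
`((E^{[ℤ]})^{<ω})⁺ ≤_B (E^{[ℤ]})⁺`. -/
theorem zJump_weakly_absorbing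
    {X : Type*} [MeasurableSpace X] [StandardBorelSpace X]
    (E : X → X → Prop) (hE : Equivalence E)
    (hEBorel : MeasurableSet {p : X × X | E p.1 p.2})
    (htwo : ∃ a b : X, ¬ E a b) :
    PerfectlyManyClasses (GammaJump (Multiplicative ℤ) E) ∧
    BorelReducible (FSJump (FinSeqRel (GammaJump (Multiplicative ℤ) E)))
      (FSJump (GammaJump (Multiplicative ℤ) E)) :=
  zJump_weakly_absorbing_general E hE htwo
end

section
/- If E is a weakly absorbing Borel equivalence relation on a standard Borel space, then the ℤ-jump E^{[ℤ]} is Borel reducible to the Friedman–Stanley jump E^+. -/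
/-!
Code `x : ℤ → X` by the countable family of its finite windows `x(k - n), …, x(k + n)`, each
preceded by a point `f (pattern E x k)` of the perfect set of pairwise inequivalent points that
records which positions of the translate `x (k + ·)` are `E`-related. If two codes have the same
`(E^{<ω})⁺`-class, then for every `n` some translate of `x` has the pattern of `y` and agrees with
`y` on `[-n, n]`. Either all these translates coincide, or two distinct ones
make `x` periodic modulo `E` with some period `δ`, and then agreement on a single window of
length `|δ|` propagates to all of `ℤ`. Composing with `(E^{<ω})⁺ ≤_B E⁺` gives the reduction.
-/

lemma measurable_sigmaMk_s7 {α : Type*} {β : α → Type*} [m : ∀ a, MeasurableSpace (β a)] (a : α) :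
    Measurable (Sigma.mk (β := β) a) :=
  fun _ hs => iInf_le (fun a => (m a).map (Sigma.mk a)) a _ hs

namespace ZJump

variable {X : Type*} {E : X → X → Prop}

lemma rel_iff_rel_of_rel (hE : Equivalence E) {a a' b b' : X} (ha : E a a') (hb : E b b') :
    E a b ↔ E a' b' :=
  ⟨fun h => hE.trans (hE.symm ha) (hE.trans h hb),
    fun h => hE.trans ha (hE.trans h (hE.symm hb))⟩

lemma setOf_rel_eq_iff (hE : Equivalence E) {a b : X} :
    {z | E a z} = {z | E b z} ↔ E a b :=
  ⟨fun h => (Set.ext_iff.mp h b).mpr (hE.refl b),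
    fun h => Set.ext fun z => rel_iff_rel_of_rel hE h (hE.refl z)⟩

lemma fsJump_comp_iff (hE : Equivalence E) {ι : Type*} {e : ℕ → ι}
    (he : Function.Surjective e) (a b : ι → X) :
    FSJump E (a ∘ e) (b ∘ e) ↔ (∀ i, ∃ j, E (a i) (b j)) ∧ ∀ j, ∃ i, E (a i) (b j) := by
  have hrange (c : ι → X) : Set.range (fun n => {z | E ((c ∘ e) n) z}) =
      Set.range (fun i => {z | E (c i) z}) :=
    he.range_comp fun i => {z | E (c i) z}
  rw [FSJump, hrange, hrange, Set.Subset.antisymm_iff, Set.range_subset_iff,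
    Set.range_subset_iff]
  simp only [Set.mem_range, setOf_rel_eq_iff hE]
  exact and_congr (forall_congr' fun i => exists_congr fun j => ⟨hE.symm, hE.symm⟩) Iff.rfl

lemma finSeqRel_equivalence (hE : Equivalence E) : Equivalence (FinSeqRel E) where
  refl _ := ⟨rfl, fun _ => hE.refl _⟩
  symm := by
    rintro ⟨n, u⟩ ⟨_, v⟩ ⟨h₁, h⟩
    cases h₁
    exact ⟨rfl, fun i => hE.symm (h i)⟩
  trans := by
    rintro ⟨n, u⟩ ⟨_, v⟩ ⟨_, w⟩ ⟨h₁, h⟩ ⟨h₂, h'⟩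
    cases h₁; cases h₂
    exact ⟨rfl, fun i => hE.trans (h i) (h' i)⟩

lemma finSeqRel_mk_iff {n : ℕ} {u v : Fin n → X} :
    FinSeqRel E ⟨n, u⟩ ⟨n, v⟩ ↔ ∀ i, E (u i) (v i) := by
  simp [FinSeqRel]

lemma gammaJump_multiplicative_int_iff (x y : Multiplicative ℤ → X) :
    GammaJump (Multiplicative ℤ) E x y ↔
      ∃ d : ℤ, ∀ m : ℤ, E (x (.ofAdd (d + m))) (y (.ofAdd m)) := by
  refine (Multiplicative.ofAdd.symm.trans (Equiv.neg ℤ)).exists_congr fun γ => ?_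
  refine Multiplicative.ofAdd.forall_congr fun m => ?_
  rfl

open scoped Classical in
/-- The isomorphism type of `i ↦ x (k + i)` modulo `E`, coded as a point of `2^ω`. -/
noncomputable def pattern (E : X → X → Prop) (x : ℤ → X) (k : ℤ) : ℕ → Bool :=
  fun m => decide (E (x (k + ((Denumerable.eqv (ℤ × ℤ)).symm m).1))
    (x (k + ((Denumerable.eqv (ℤ × ℤ)).symm m).2)))

lemma pattern_eq_pattern_iff {x y : ℤ → X} {k k' : ℤ} :
    pattern E x k = pattern E y k' ↔
      ∀ i j : ℤ, E (x (k + i)) (x (k + j)) ↔ E (y (k' + i)) (y (k' + j)) := by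
  rw [funext_iff, (Denumerable.eqv (ℤ × ℤ)).symm.forall_congr_left]
  simp only [pattern, Equiv.symm_symm, Equiv.symm_apply_apply, Prod.forall, decide_eq_decide]

lemma pattern_eq_of_forall_rel (hE : Equivalence E) {x y : ℤ → X} {k k' : ℤ}
    (h : ∀ m, E (x (k + m)) (y (k' + m))) : pattern E x k = pattern E y k' :=
  pattern_eq_pattern_iff.mpr fun i j => rel_iff_rel_of_rel hE (h i) (h j)

lemma rel_iff_rel_add_of_pattern_eq {x : ℤ → X} {a b : ℤ}
    (h : pattern E x a = pattern E x b) (p q : ℤ) :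
    E (x p) (x q) ↔ E (x (p + (b - a))) (x (q + (b - a))) := by
  have := pattern_eq_pattern_iff.mp h (p - a) (q - a)
  have ha (r : ℤ) : a + (r - a) = r := by ring
  have hb (r : ℤ) : b + (r - a) = r + (b - a) := by ring
  simpa only [ha, hb] using this

lemma rel_iff_rel_add_of_windows (hE : Equivalence E) {x y : ℤ → X} {δ : ℤ}
    (hinv : ∀ p q, E (x p) (x q) ↔ E (x (p + δ)) (x (q + δ)))
    (hwin : ∀ n : ℕ, ∃ d, ∀ m : ℤ, m.natAbs ≤ n → E (x (d + m)) (y m)) (p q : ℤ) :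
    E (x p) (y q) ↔ E (x (p + δ)) (y (q + δ)) := by
  obtain ⟨d, hd⟩ := hwin (q.natAbs + δ.natAbs)
  have hq : E (x (d + q)) (y q) := hd q (by omega)
  have hqδ : E (x (d + q + δ)) (y (q + δ)) := add_assoc d q δ ▸ hd (q + δ) (by omega)
  calc E (x p) (y q) ↔ E (x p) (x (d + q)) := rel_iff_rel_of_rel hE (hE.refl _) (hE.symm hq)
    _ ↔ E (x (p + δ)) (x (d + q + δ)) := hinv p (d + q)
    _ ↔ E (x (p + δ)) (y (q + δ)) := rel_iff_rel_of_rel hE (hE.refl _) hqδ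

theorem exists_forall_rel_of_windows (hE : Equivalence E) {x y : ℤ → X} {d : ℕ → ℤ}
    (hpat : ∀ n, pattern E x (d n) = pattern E y 0)
    (hwin : ∀ n m, m.natAbs ≤ n → E (x (d n + m)) (y m)) :
    ∃ D, ∀ m, E (x (D + m)) (y m) := by
  by_cases hconst : ∀ n, d n = d 0
  · exact ⟨d 0, fun m => hconst m.natAbs ▸ hwin _ m le_rfl⟩
  push Not at hconst
  obtain ⟨N, hN⟩ := hconst
  -- two distinct anchors with the same pattern make `x` periodic modulo `E`
  have hinv := rel_iff_rel_add_of_pattern_eq ((hpat 0).trans (hpat N).symm)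
  set δ := d N - d 0
  have hδ : δ ≠ 0 := sub_ne_zero.mpr hN
  set D := d δ.natAbs
  have hper : Function.Periodic (fun m => E (x (D + m)) (y m)) δ := by
    intro m
    have := rel_iff_rel_add_of_windows hE hinv (fun n => ⟨d n, hwin n⟩) (D + m) m
    rw [add_assoc] at this
    exact propext this.symm
  refine ⟨D, fun m => ?_⟩
  rw [← hper.sub_int_mul_eq (m / δ), Int.cast_id, mul_comm, ← Int.emod_def]
  have h₀ := Int.emod_nonneg m hδ
  have h₁ := Int.emod_lt m hδ
  exact hwin _ _ (by omega)

lemma forall_fin_two_mul_add_one_iff {n : ℕ} {P : ℤ → Prop} :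
    (∀ i : Fin (2 * n + 1), P ((i : ℕ) - n)) ↔ ∀ m : ℤ, m.natAbs ≤ n → P m := by
  refine ⟨fun h m hm => ?_, fun h i => h _ (by omega)⟩
  have := h ⟨(m + n).toNat, by omega⟩
  rwa [Int.toNat_of_nonneg (by omega), add_sub_cancel_right] at this

noncomputable def markedWindow (E : X → X → Prop) (f : (ℕ → Bool) → X) (x : ℤ → X) (k : ℤ)
    (n : ℕ) : Σ m : ℕ, Fin m → X :=
  ⟨2 * n + 2, Fin.cons (f (pattern E x k)) fun i : Fin (2 * n + 1) => x (k + ((i : ℕ) - n))⟩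

lemma finSeqRel_markedWindow_iff (hE : Equivalence E) {f : (ℕ → Bool) → X}
    (hf : ∀ a b, E (f a) (f b) → a = b) {x y : ℤ → X} {k k' : ℤ} {n n' : ℕ} :
    FinSeqRel E (markedWindow E f x k n) (markedWindow E f y k' n') ↔
      n = n' ∧ pattern E x k = pattern E y k' ∧
        ∀ m : ℤ, m.natAbs ≤ n → E (x (k + m)) (y (k' + m)) := by
  have hf' (a b) : E (f a) (f b) ↔ a = b := ⟨hf a b, by rintro rfl; exact hE.refl _⟩
  have hsame : FinSeqRel E (markedWindow E f x k n) (markedWindow E f y k' n) ↔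
      pattern E x k = pattern E y k' ∧ ∀ m : ℤ, m.natAbs ≤ n → E (x (k + m)) (y (k' + m)) := by
    rw [markedWindow, markedWindow, finSeqRel_mk_iff, Fin.forall_fin_succ]
    simp only [Fin.cons_zero, Fin.cons_succ, hf']
    exact and_congr_right'
      (forall_fin_two_mul_add_one_iff (P := fun m => E (x (k + m)) (y (k' + m))))
  refine ⟨fun h => ?_, fun ⟨hn, h⟩ => hn ▸ hsame.mpr h⟩
  obtain rfl : n = n' := by have := h.1; simp only [markedWindow] at this; omega
  exact ⟨rfl, hsame.mp h⟩

noncomputable def markedWindows (E : X → X → Prop) (f : (ℕ → Bool) → X) (x : ℤ → X) :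
    ℕ → Σ m : ℕ, Fin m → X :=
  (fun p : ℤ × ℕ => markedWindow E f x p.1 p.2) ∘ (Denumerable.eqv (ℤ × ℕ)).symm

theorem fsJump_markedWindows_iff (hE : Equivalence E) {f : (ℕ → Bool) → X}
    (hf : ∀ a b, E (f a) (f b) → a = b) (x y : ℤ → X) :
    FSJump (FinSeqRel E) (markedWindows E f x) (markedWindows E f y) ↔
      ∃ d : ℤ, ∀ m, E (x (d + m)) (y m) := by
  rw [markedWindows, markedWindows,
    fsJump_comp_iff (finSeqRel_equivalence hE) (Denumerable.eqv (ℤ × ℕ)).symm.surjective]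
  simp only [Prod.forall, Prod.exists, finSeqRel_markedWindow_iff hE hf]
  constructor
  · rintro ⟨-, h⟩
    choose k len hlen hpat hwin using h 0
    refine exists_forall_rel_of_windows hE (d := k) hpat fun n m hm => ?_
    simpa only [zero_add] using hwin n m (by rw [hlen]; exact hm)
  · rintro ⟨d, hd⟩
    have hshift (k m : ℤ) : E (x (k + m)) (y (k - d + m)) := by
      rw [show k + m = d + (k - d + m) by ring]
      exact hd _
    refine ⟨fun k n => ⟨k - d, n, rfl, pattern_eq_of_forall_rel hE (hshift k),
      fun m _ => hshift k m⟩, fun k n => ?_⟩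
    have hshift' (m : ℤ) : E (x (k + d + m)) (y (k + m)) := by
      simpa only [add_sub_cancel_right] using hshift (k + d) m
    exact ⟨k + d, n, rfl, pattern_eq_of_forall_rel hE hshift', fun m _ => hshift' m⟩

section Measurability

variable [MeasurableSpace X]

lemma measurable_pattern (hE : MeasurableSet {p : X × X | E p.1 p.2}) (k : ℤ) :
    Measurable fun x : ℤ → X => pattern E x k := by
  refine measurable_pi_lambda _ fun m => measurable_to_bool ?_
  have hrel (i j : ℤ) : MeasurableSet {x : ℤ → X | E (x i) (x j)} :=
    hE.preimage (by fun_prop : Measurable fun x : ℤ → X => (x i, x j))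
  convert hrel (k + ((Denumerable.eqv (ℤ × ℤ)).symm m).1)
    (k + ((Denumerable.eqv (ℤ × ℤ)).symm m).2)
  ext x
  simp [pattern]

lemma measurable_markedWindows (hE : MeasurableSet {p : X × X | E p.1 p.2})
    {f : (ℕ → Bool) → X} (hf : Measurable f) :
    Measurable (markedWindows E f) := by
  refine measurable_pi_lambda _ fun i => (measurable_sigmaMk_s7 _).comp ?_
  refine measurable_pi_lambda _ fun j => Fin.cases ?_ (fun j => ?_) j
  · exact hf.comp (measurable_pattern hE _)
  · exact measurable_pi_apply _

end Measurability

end ZJump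

theorem zJump_borelReducible_fsJump_of_weakly_absorbing_general
    {X : Type*} [MeasurableSpace X]
    (E : X → X → Prop) (hE : Equivalence E)
    (hEBorel : MeasurableSet {p : X × X | E p.1 p.2})
    (hperf : PerfectlyManyClasses E)
    (habs : BorelReducible (FSJump (FinSeqRel E)) (FSJump E)) :
    BorelReducible (GammaJump (Multiplicative ℤ) E) (FSJump E) := by
  obtain ⟨f, hf, -, hfE⟩ := hperf
  obtain ⟨g, hg, hgE⟩ := habs
  have hf' (a b) (h : E (f a) (f b)) : a = b := by_contra fun hab => hfE a b hab h
  have hofAdd : Measurable fun x : Multiplicative ℤ → X => x ∘ Multiplicative.ofAdd :=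
    measurable_pi_lambda _ fun _ => measurable_pi_apply _
  refine ⟨fun x => g (ZJump.markedWindows E f (x ∘ Multiplicative.ofAdd)),
    hg.comp ((ZJump.measurable_markedWindows hEBorel hf).comp hofAdd), fun x y => ?_⟩
  rw [ZJump.gammaJump_multiplicative_int_iff, ← hgE, ZJump.fsJump_markedWindows_iff hE hf']
  rfl

/-- If `E` is a weakly absorbing Borel equivalence relation on a standard
Borel space (perfectly many classes and `(E^{<ω})⁺ ≤_B E⁺`), then `E^{[ℤ]} ≤_B E⁺`. -/
theorem zJump_borelReducible_fsJump_of_weakly_absorbing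
    {X : Type*} [MeasurableSpace X] [StandardBorelSpace X]
    (E : X → X → Prop) (hE : Equivalence E)
    (hEBorel : MeasurableSet {p : X × X | E p.1 p.2})
    (hperf : PerfectlyManyClasses E)
    (habs : BorelReducible (FSJump (FinSeqRel E)) (FSJump E)) :
    BorelReducible (GammaJump (Multiplicative ℤ) E) (FSJump E) :=
  zJump_borelReducible_fsJump_of_weakly_absorbing_general E hE hEBorel hperf habs
end

section
/- The ℤ-jump E_0^{[ℤ]} is Borel reducible to its pairwise-inequivalent part (E_0)^{[ℤ]}_p.i., i.e., E_0^{[ℤ]} is Borel reducible to the restriction of E_0^{[ℤ]} to the set of x ∈ (2^ω)^ℤ whose coordinates are pairwise E_0-inequivalent. -/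
/-- `E₀`: eventual agreement on `2^ω`. -/
def E0 : (ℕ → Bool) → (ℕ → Bool) → Prop :=
  fun x y => ∀ᶠ n in Filter.atTop, x n = y n

/-- The pairwise-inequivalent part of `X^Γ`. -/
def PIPart (Γ : Type*) {X : Type*} (E : X → X → Prop) : Set (Γ → X) :=
  {x | ∀ γ δ : Γ, γ ≠ δ → ¬ E (x γ) (x δ)}

/-!
Write `[x n]` for the `E₀`-class of `x n`, i.e. its germ at infinity.

If `n ↦ [x n]` is periodic, with least period `p`, the `E₀^{[ℤ]}`-class of `x` is the orbit of
the tuple `([x 0], …, [x (p-1)])` under cyclic rotation. Reading `x 0, …, x (p-1)` column by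
column, a rotation `k ≠ 0` moves infinitely many columns, so the rotation relating two such
tuples is pinned down by finitely many columns near any position `m`; the rotation orbits of
these finite blocks give a sequence of codes that is eventually constant along exactly this
class. Such an `x` is sent to a rigid configuration: coordinate `n` records `n` exactly, together
with the codes.

Otherwise coordinate `n` records exactly the pattern `{(i, j) | [x (n+i)] = [x (n+j)]}` and, up to
`E₀`, the window `x n, …, x (n+d-1)`, where `d` is the least period of the pattern. Two coordinates
with equal patterns and `E₀`-equivalent windows would make `n ↦ [x n]` periodic, so the image is
pairwise inequivalent, while the shift relating two configurations relates their images.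
-/

theorem Function.Periodic.eq_of_modEq {α : Type*} {f : ℤ → α} {c a b : ℤ}
    (h : Function.Periodic f c) (hab : a ≡ b [ZMOD c]) : f a = f b := by
  obtain ⟨t, ht⟩ := hab.dvd
  rw [show b = a + t * c by linarith]
  simpa using (h.int_mul t a).symm

theorem List.rotate_sub_eq_self {β : Type*} {l : List β} {a b : ℕ} (h : l.rotate a = l.rotate b)
    (hab : a ≤ b) : l.rotate (b - a) = l := by
  rw [← List.rotate_eq_rotate (n := a), List.rotate_rotate, Nat.sub_add_cancel hab, h]

noncomputable section
namespace E0ZJump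

open Filter Function

attribute [local instance] Classical.propDecidable

def pack (z : ℕ → ℕ → Bool) : ℕ → Bool := fun r => z (Nat.unpair r).1 (Nat.unpair r).2

theorem e0_pack_iff {z w : ℕ → ℕ → Bool} :
    E0 (pack z) (pack w) ↔ (∀ i, E0 (z i) (w i)) ∧ ∀ᶠ i in atTop, z i = w i := by
  constructor
  · intro h
    obtain ⟨R, hR⟩ := eventually_atTop.1 h
    refine ⟨fun i => eventually_atTop.2 ⟨R, fun j hj => ?_⟩,
      eventually_atTop.2 ⟨R, fun i hi => funext fun j => ?_⟩⟩
    · simpa [pack] using hR (Nat.pair i j) (hj.trans (Nat.right_le_pair i j))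
    · simpa [pack] using hR (Nat.pair i j) (hi.trans (Nat.left_le_pair i j))
  · rintro ⟨hrows, htail⟩
    obtain ⟨M, hM⟩ := eventually_atTop.1 htail
    obtain ⟨N, hN⟩ := eventually_atTop.1
      ((eventually_all_finset (Finset.range M)).2 fun i _ => hrows i)
    refine eventually_atTop.2 ⟨max M N ^ 2, fun r hr => ?_⟩
    by_cases hi : M ≤ (Nat.unpair r).1
    · simp [pack, hM _ hi]
    · refine hN _ ?_ _ (Finset.mem_range.2 (not_le.1 hi))
      by_contra hj
      -- otherwise `r = pair a b` with `a < M` and `b < N`, so `r < max M N ^ 2`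
      have hsmall : max (Nat.unpair r).1 (Nat.unpair r).2 + 1 ≤ max M N := by omega
      have := Nat.pair_lt_max_add_one_sq (Nat.unpair r).1 (Nat.unpair r).2
      rw [Nat.pair_unpair] at this
      exact absurd (this.trans_le (Nat.pow_le_pow_left hsmall 2)) (not_lt.2 hr)

theorem e0_const_iff {a b : Bool} : E0 (fun _ => a) (fun _ => b) ↔ a = b := eventually_const

/-- Row `0` is `v` and row `i + 1` is constantly the `i`-th bit of `e`, so that `E₀` compares
`e` exactly. -/
def tagged {ι : Type*} [Denumerable ι] (e : ι → Bool) (v : ℕ → Bool) : ℕ → Bool :=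
  pack fun
    | 0 => v
    | i + 1 => fun _ => e (Denumerable.ofNat ι i)

theorem e0_tagged_iff {ι : Type*} [Denumerable ι] {e e' : ι → Bool} {v v' : ℕ → Bool} :
    E0 (tagged e v) (tagged e' v') ↔ e = e' ∧ E0 v v' := by
  rw [tagged, tagged, e0_pack_iff]
  constructor
  · rintro ⟨hrows, -⟩
    refine ⟨funext fun i => ?_, hrows 0⟩
    simpa using e0_const_iff.1 (hrows (Encodable.encode i + 1))
  · rintro ⟨rfl, h⟩
    refine ⟨fun i => ?_, eventually_atTop.2 ⟨1, fun i hi => ?_⟩⟩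
    · cases i
      exacts [h, e0_const_iff.2 rfl]
    · obtain ⟨i, rfl⟩ := Nat.exists_eq_add_of_le' hi
      rfl

def unaryCode (g : ℕ → ℕ) : ℕ → Bool := pack fun m j => decide (j < g m)

theorem e0_unaryCode_iff {g h : ℕ → ℕ} :
    E0 (unaryCode g) (unaryCode h) ↔ ∀ᶠ m in atTop, g m = h m := by
  have hrow : ∀ a b : ℕ, (fun j => decide (j < a)) = (fun j => decide (j < b)) ↔ a = b := by
    refine fun a b => ⟨fun H => ?_, fun H => H ▸ rfl⟩
    by_contra hne
    rcases Nat.lt_or_gt_of_ne hne with hlt | hlt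
    · simpa [hlt] using congrFun H a
    · simpa [hlt] using congrFun H b
  rw [unaryCode, unaryCode, e0_pack_iff]
  simp only [hrow, and_iff_right_iff_imp]
  exact fun _ m => eventually_atTop.2 ⟨max (g m) (h m), fun j hj => decide_eq_decide.2 (by omega)⟩

def window (L : ℕ) (x : ℤ → ℕ → Bool) (n : ℤ) : ℕ → Bool :=
  pack fun i => if i < L then x (n + i) else fun _ => false

theorem e0_window_iff {L : ℕ} {x y : ℤ → ℕ → Bool} {m n : ℤ} :
    E0 (window L x m) (window L y n) ↔ ∀ i < L, E0 (x (m + i)) (y (n + i)) := by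
  rw [window, window, e0_pack_iff]
  refine ⟨fun h i hi => by simpa [hi] using h.1 i, fun h => ⟨fun i => ?_, ?_⟩⟩
  · by_cases hi : i < L
    · simpa [hi] using h i hi
    · simp only [hi, if_false]; exact EventuallyEq.rfl
  · exact eventually_atTop.2 ⟨L, fun i hi => by simp [not_lt.2 hi]⟩

def germ (x : ℤ → ℕ → Bool) (n : ℤ) : (atTop : Filter ℕ).Germ Bool := ↑(x n)

theorem e0_iff_germ_eq {x y : ℤ → ℕ → Bool} {i j : ℤ} : E0 (x i) (y j) ↔ germ x i = germ y j :=
  Germ.coe_eq.symm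

def ShiftRel {X : Type*} (E : X → X → Prop) (x y : ℤ → X) : Prop :=
  ∃ γ : ℤ, ∀ a, E (x (a - γ)) (y a)

theorem shiftRel_e0_iff {x y : ℤ → ℕ → Bool} :
    ShiftRel E0 x y ↔ ShiftRel Eq (germ x) (germ y) := by
  simp only [ShiftRel, germ, e0_iff_germ_eq]

theorem ShiftRel.eq_comp_sub {α : Type*} {f g : ℤ → α} (h : ShiftRel Eq f g) :
    ∃ γ, g = fun a => f (a - γ) :=
  h.imp fun _ hγ => (funext hγ).symm

def periods {α : Type*} (f : ℤ → α) : AddSubgroup ℤ where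
  carrier := {c | Periodic f c}
  zero_mem' := fun _ => by simp
  add_mem' := Periodic.add_period
  neg_mem' := Periodic.neg

def patternPeriods {α : Type*} (f : ℤ → α) : AddSubgroup ℤ where
  carrier := {d | ∀ i j, f (i + d) = f (j + d) ↔ f i = f j}
  zero_mem' := by simp
  add_mem' {c d} hc hd i j := by rw [← add_assoc, ← add_assoc, hd, hc]
  neg_mem' {d} hd i j := by rw [← hd, neg_add_cancel_right, neg_add_cancel_right]

theorem mem_patternPeriods {α : Type*} {f : ℤ → α} {d : ℤ} :
    d ∈ patternPeriods f ↔ ∀ i j, f (i + d) = f (j + d) ↔ f i = f j := Iff.rfl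

def leastPositive (H : AddSubgroup ℤ) : ℕ := sInf {d : ℕ | 0 < d ∧ (d : ℤ) ∈ H}

theorem leastPositive_spec {H : AddSubgroup ℤ} (hH : H ≠ ⊥) :
    0 < leastPositive H ∧ (leastPositive H : ℤ) ∈ H := by
  refine Nat.sInf_mem (s := {d : ℕ | 0 < d ∧ (d : ℤ) ∈ H}) ?_
  obtain ⟨c, hc, hc0⟩ := (H.bot_or_exists_ne_zero).resolve_left hH
  refine ⟨c.natAbs, Int.natAbs_pos.2 hc0, ?_⟩
  rcases Int.natAbs_eq c with h | h
  · rwa [← h]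
  · rw [h] at hc; simpa using H.neg_mem hc

theorem not_mem_of_lt_leastPositive {H : AddSubgroup ℤ} {d : ℕ} (h0 : 0 < d)
    (hd : d < leastPositive H) : (d : ℤ) ∉ H :=
  fun h => Nat.notMem_of_lt_sInf hd ⟨h0, h⟩

theorem ShiftRel.periods_eq {α : Type*} {f g : ℤ → α} (h : ShiftRel Eq f g) :
    periods g = periods f := by
  obtain ⟨γ, rfl⟩ := h.eq_comp_sub
  ext c
  exact ⟨fun hc a => by simpa [add_right_comm a γ c] using hc (a + γ), fun hc => hc.sub_const γ⟩

theorem patternPeriods_eq_of_pattern {α β : Type*} {f : ℤ → α} {g : ℤ → β} {m n : ℤ}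
    (h : ∀ i j, f (m + i) = f (m + j) ↔ g (n + i) = g (n + j)) :
    patternPeriods f = patternPeriods g := by
  have key : ∀ a b, f a = f b ↔ g (a - m + n) = g (b - m + n) := fun a b => by
    simpa [add_comm n] using h (a - m) (b - m)
  ext d
  simp only [mem_patternPeriods, key]
  constructor
  · intro hd i j
    have := hd (i + m - n) (j + m - n)
    rwa [show i + m - n + d - m + n = i + d by ring, show j + m - n + d - m + n = j + d by ring,
      show i + m - n - m + n = i by ring, show j + m - n - m + n = j by ring] at this
  · intro hd i j
    have := hd (i - m + n) (j - m + n)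
    rwa [show i - m + n + d = i + d - m + n by ring, show j - m + n + d = j + d - m + n by ring]
      at this

theorem ShiftRel.patternPeriods_eq {α : Type*} {f g : ℤ → α} (h : ShiftRel Eq f g) :
    patternPeriods g = patternPeriods f := by
  obtain ⟨γ, rfl⟩ := h.eq_comp_sub
  exact (patternPeriods_eq_of_pattern (m := 0) (n := γ) fun i j => by simp).symm

section PeriodicFunctions

variable {α : Type*} {f g : ℤ → α} {p : ℕ}

theorem apply_add_eq_of_forall_lt (hp : 0 < p) (hf : Periodic f p) (hg : Periodic g p) {k : ℕ}
    (h : ∀ r < p, g r = f ((r + k) % p : ℕ)) (a : ℤ) : f (a + k) = g a := by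
  have hr : (((a % p).toNat : ℕ) : ℤ) = a % p := Int.toNat_of_nonneg (Int.emod_nonneg _ (by omega))
  have hrp : (a % p).toNat < p := by have := Int.emod_lt_of_pos a (by omega : (0 : ℤ) < p); omega
  rw [hg.eq_of_modEq (b := ((a % p).toNat : ℤ)) (by rw [hr]; exact (Int.mod_modEq a p).symm),
    h _ hrp]
  refine hf.eq_of_modEq ?_
  push_cast
  rw [hr]
  exact ((Int.mod_modEq a p).add_right k).symm.trans (Int.mod_modEq _ _).symm

theorem forall_lt_of_apply_sub_eq (hp : 0 < p) (hf : Periodic f p) {γ : ℤ}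
    (h : ∀ a, f (a - γ) = g a) : ∀ r < p, g r = f ((r + ((-γ) % p).toNat) % p : ℕ) := by
  intro r _
  rw [← h]
  refine hf.eq_of_modEq ?_
  push_cast
  rw [Int.toNat_of_nonneg (Int.emod_nonneg _ (by omega)), sub_eq_add_neg]
  exact ((Int.mod_modEq (-γ) p).add_left r).symm.trans (Int.mod_modEq _ _).symm

theorem shiftRel_iff_of_periodic (hp : 0 < p) (hf : Periodic f p) (hg : Periodic g p) :
    ShiftRel Eq f g ↔ ∃ k : ℕ, ∀ r < p, g r = f ((r + k) % p : ℕ) :=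
  ⟨fun ⟨_, h⟩ => ⟨_, forall_lt_of_apply_sub_eq hp hf h⟩, fun ⟨k, h⟩ =>
    ⟨-k, fun a => by rw [sub_neg_eq_add]; exact apply_add_eq_of_forall_lt hp hf hg h a⟩⟩

theorem periodic_sub_of_window {d : ℕ} {m n : ℤ} (hd0 : 0 < d) (hd : (d : ℤ) ∈ patternPeriods f)
    (hw : ∀ i < d, f (m + i) = f (n + i)) : Periodic f (n - m) := by
  intro r
  set i := ((r - m) % d).toNat
  have hi : (i : ℤ) = (r - m) % d := Int.toNat_of_nonneg (Int.emod_nonneg _ (by omega))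
  have hid : i < d := by have := Int.emod_lt_of_pos (r - m) (by omega : (0 : ℤ) < d); omega
  have hdiv := Int.emod_add_mul_ediv (r - m) d
  have key := (mem_patternPeriods.1 ((patternPeriods f).zsmul_mem hd ((r - m) / d))
    (m + i) (n + i)).2 (hw i hid)
  rw [smul_eq_mul, show m + i + (r - m) / d * d = r by linarith,
    show n + i + (r - m) / d * d = r + (n - m) by linarith] at key
  exact key.symm

theorem sub_mem_patternPeriods {m n : ℤ}
    (h : ∀ i j, f (m + i) = f (m + j) ↔ f (n + i) = f (n + j)) : n - m ∈ patternPeriods f := by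
  intro i j
  have := h (i - m) (j - m)
  rw [show m + (i - m) = i by ring, show m + (j - m) = j by ring,
    show n + (i - m) = i + (n - m) by ring, show n + (j - m) = j + (n - m) by ring] at this
  exact this.symm

theorem eq_of_pattern_of_window (hf : periods f = ⊥) {m n : ℤ}
    (hpat : ∀ i j, f (m + i) = f (m + j) ↔ f (n + i) = f (n + j))
    (hw : ∀ i < max (leastPositive (patternPeriods f)) 1, f (m + i) = f (n + i)) : m = n := by
  by_contra hmn
  have hne : patternPeriods f ≠ ⊥ := fun h => by
    have := sub_mem_patternPeriods hpat
    rw [h, AddSubgroup.mem_bot, sub_eq_zero] at this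
    exact hmn this.symm
  obtain ⟨hd0, hd⟩ := leastPositive_spec hne
  have : n - m ∈ periods f := periodic_sub_of_window hd0 hd fun i hi => hw i (lt_max_of_lt_left hi)
  rw [hf, AddSubgroup.mem_bot, sub_eq_zero] at this
  exact hmn this.symm

end PeriodicFunctions

section RotationCodes

variable {β : Type*} {u v : ℕ → List β} {p : ℕ}

theorem map_rotate_eq_of_modEq {B : List (List β)} (hB : ∀ l ∈ B, l.length = p) {a b : ℕ}
    (h : a ≡ b [MOD p]) : B.map (·.rotate a) = B.map (·.rotate b) :=
  List.map_congr_left fun l hl => by rw [← List.rotate_mod, hB l hl, h, ← hB l hl, List.rotate_mod]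

/-- The junk value `m`, when no column from `m` on is moved by rotation by `k`, covers `k = 0`. -/
def firstMoved (u : ℕ → List β) (k m : ℕ) : ℕ := m + sInf {i | (u (m + i)).rotate k ≠ u (m + i)}

theorem le_firstMoved (k m : ℕ) : m ≤ firstMoved u k m := Nat.le_add_right _ _

theorem firstMoved_zero (m : ℕ) : firstMoved u 0 m = m := by simp [firstMoved]

theorem rotate_firstMoved_ne {k : ℕ} (h : ∃ᶠ c in atTop, (u c).rotate k ≠ u c) (m : ℕ) :
    (u (firstMoved u k m)).rotate k ≠ u (firstMoved u k m) := by
  obtain ⟨c, hmc, hc⟩ := h.forall_exists_of_atTop m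
  refine Nat.sInf_mem (s := {i | (u (m + i)).rotate k ≠ u (m + i)}) ⟨c - m, ?_⟩
  rwa [Set.mem_ofPred_eq, Nat.add_sub_cancel' hmc]

theorem firstMoved_congr {k M m : ℕ}
    (h : ∀ c ≥ M, ((v c).rotate k ≠ v c ↔ (u c).rotate k ≠ u c)) (hm : M ≤ m) :
    firstMoved v k m = firstMoved u k m := by
  simp only [firstMoved, Set.ext fun i => h (m + i) (by omega)]

/-- For each `k < p`, the first columns from `m` and from `m + 1` on that rotation by `k` moves
(for `k = 0`, the columns `m` and `m + 1` themselves). The blocks at `m` and `m + 1` share the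
witnesses from `m + 1` on, which forces them to be rotated alike. -/
def block (u : ℕ → List β) (p m : ℕ) : List (List β) :=
  (List.range p ×ˢ List.range 2).map fun kd => u (firstMoved u kd.1 (m + kd.2))

def rotOrbit (p : ℕ) (B : List (List β)) : Finset (List (List β)) :=
  (Finset.range p).image fun k => B.map (·.rotate k)

theorem rotOrbit_map_rotate (hp : 0 < p) {B : List (List β)} (hB : ∀ l ∈ B, l.length = p)
    (k : ℕ) : rotOrbit p (B.map (·.rotate k)) = rotOrbit p B := by
  ext B'
  simp only [rotOrbit, Finset.mem_image, Finset.mem_range, List.map_map, Function.comp_def,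
    List.rotate_rotate]
  constructor
  · rintro ⟨j, -, rfl⟩
    exact ⟨(k + j) % p, Nat.mod_lt _ hp, map_rotate_eq_of_modEq hB (Nat.mod_modEq _ _)⟩
  · rintro ⟨j, hj, rfl⟩
    refine ⟨(j + (p - 1) * k) % p, Nat.mod_lt _ hp, map_rotate_eq_of_modEq hB ?_⟩
    calc k + (j + (p - 1) * k) % p ≡ k + (j + (p - 1) * k) [MOD p] :=
          (Nat.mod_modEq _ _).add_left k
      _ = j + p * k := by
          obtain ⟨q, rfl⟩ := Nat.exists_eq_add_of_lt hp
          simp only [zero_add, Nat.add_sub_cancel]; ring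
      _ ≡ j [MOD p] := by simp [Nat.ModEq]

theorem exists_of_rotOrbit_eq (hp : 0 < p) {B B' : List (List β)}
    (h : rotOrbit p B = rotOrbit p B') : ∃ κ < p, B' = B.map (·.rotate κ) := by
  have : B' ∈ rotOrbit p B' := Finset.mem_image.2 ⟨0, Finset.mem_range.2 hp, by simp⟩
  rw [← h] at this
  obtain ⟨κ, hκ, hB⟩ := Finset.mem_image.1 this
  exact ⟨κ, Finset.mem_range.1 hκ, hB.symm⟩

def blockCode (u : ℕ → List β) (p m : ℕ) : Finset (List (List β)) := rotOrbit p (block u p m)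

theorem blockCode_eventuallyEq (hp : 0 < p) (hu : ∀ c, (u c).length = p) {k : ℕ}
    (h : ∀ᶠ c in atTop, v c = (u c).rotate k) :
    ∀ᶠ m in atTop, blockCode v p m = blockCode u p m := by
  obtain ⟨M, hM⟩ := eventually_atTop.1 h
  have hmoved : ∀ j, ∀ c ≥ M, ((v c).rotate j ≠ v c ↔ (u c).rotate j ≠ u c) := fun j c hc => by
    rw [hM c hc, List.rotate_rotate, add_comm, ← List.rotate_rotate, Ne, Ne,
      List.rotate_eq_rotate]
  refine eventually_atTop.2 ⟨M, fun m hm => ?_⟩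
  have hblock : block v p m = (block u p m).map (·.rotate k) := by
    simp only [block, List.map_map]
    refine List.map_congr_left fun kd _ => ?_
    rw [firstMoved_congr (hmoved kd.1) (hm.trans (Nat.le_add_right m kd.2))]
    exact hM _ (hm.trans ((Nat.le_add_right m kd.2).trans (le_firstMoved _ _)))
  rw [blockCode, blockCode, hblock, rotOrbit_map_rotate hp]
  simp only [block, List.mem_map]
  rintro l ⟨kd, -, rfl⟩
  exact hu _

theorem exists_eventually_eq_rotate (hp : 0 < p)
    (hmov : ∀ k, 0 < k → k < p → ∃ᶠ c in atTop, (u c).rotate k ≠ u c)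
    (h : ∀ᶠ m in atTop, blockCode u p m = blockCode v p m) :
    ∃ k, ∀ᶠ c in atTop, v c = (u c).rotate k := by
  obtain ⟨M, hM⟩ := eventually_atTop.1 h
  choose! κ hκp hκ using fun m hm => exists_of_rotOrbit_eq hp (hM m hm)
  have hentry : ∀ m ≥ M, ∀ k < p, ∀ d < 2,
      v (firstMoved v k (m + d)) = (u (firstMoved u k (m + d))).rotate (κ m) := by
    intro m hm k hk d hd
    have := List.map_inj_left.1 ((hκ m hm).trans (List.map_map ..)) (k, d)
      (List.mem_product.2 ⟨List.mem_range.2 hk, List.mem_range.2 hd⟩)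
    simpa [block] using this
  -- the column `firstMoved u e (m + 1)` occurs in the blocks at `m` and at `m + 1`
  have hstep : ∀ m ≥ M, κ (m + 1) = κ m := by
    intro m hm
    have hcommon : ∀ e < p, (u (firstMoved u e (m + 1))).rotate (κ m) =
        (u (firstMoved u e (m + 1))).rotate (κ (m + 1)) := fun e he => by
      rw [← hentry m hm e he 1 (by norm_num), ← hentry (m + 1) (by omega) e he 0 (by norm_num)]
    by_contra hne
    rcases Nat.lt_or_gt_of_ne hne with hlt | hlt
    · exact rotate_firstMoved_ne (hmov _ (by omega) (by have := hκp m hm; omega)) (m + 1)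
        (List.rotate_sub_eq_self (hcommon _ (by have := hκp m hm; omega)).symm hlt.le)
    · exact rotate_firstMoved_ne (hmov _ (by omega) (by have := hκp (m + 1) (by omega); omega))
        (m + 1) (List.rotate_sub_eq_self (hcommon _ (by have := hκp (m + 1) (by omega); omega))
          hlt.le)
  have hconst : ∀ m ≥ M, κ m = κ M := fun m hm => by
    induction m, hm using Nat.le_induction with
    | base => rfl
    | succ m hm ih => rw [hstep m hm, ih]
  refine ⟨κ M, eventually_atTop.2 ⟨M, fun c hc => ?_⟩⟩
  simpa [firstMoved_zero, hconst c hc] using hentry c hc 0 hp 0 (by norm_num)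

end RotationCodes

theorem map_range_rotate {β : Type*} (f : ℕ → β) (p k : ℕ) :
    ((List.range p).map f).rotate k = (List.range p).map fun r => f ((r + k) % p) := by
  refine List.ext_getElem (by simp) fun r h₁ h₂ => ?_
  simp only [List.getElem_rotate, List.getElem_map, List.getElem_range, List.length_map,
    List.length_range]

def col (x : ℤ → ℕ → Bool) (p c : ℕ) : List Bool := (List.range p).map fun r : ℕ => x r c

theorem length_col (x : ℤ → ℕ → Bool) (p c : ℕ) : (col x p c).length = p := by simp [col]

theorem eventually_col_eq_rotate_iff {x y : ℤ → ℕ → Bool} {p k : ℕ} :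
    (∀ᶠ c in atTop, col y p c = (col x p c).rotate k) ↔
      ∀ r < p, germ y r = germ x ((r + k) % p : ℕ) := by
  simpa [col, map_range_rotate, List.map_inj_left, ← e0_iff_germ_eq, E0] using
    eventually_all_finset (Finset.range p) (l := atTop)
      (p := fun r c => y r c = x ((r + k) % p : ℕ) c)

theorem frequently_rotate_col_ne {x : ℤ → ℕ → Bool} {p k : ℕ} (hp : 0 < p)
    (hx : Periodic (germ x) p) (hk : ¬Periodic (germ x) k) :
    ∃ᶠ c in atTop, (col x p c).rotate k ≠ col x p c := fun H => by
  simp only [ne_eq, not_not] at H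
  exact hk (apply_add_eq_of_forall_lt hp hx hx
    (eventually_col_eq_rotate_iff.1 (H.mono fun c hc => hc.symm)))

def leastPeriod (x : ℤ → ℕ → Bool) : ℕ := leastPositive (periods (germ x))

/-- The period is part of the code, so that eventually equal codes force equal periods. -/
def periodCode (x : ℤ → ℕ → Bool) (m : ℕ) : ℕ :=
  Encodable.encode (leastPeriod x, blockCode (col x (leastPeriod x)) (leastPeriod x) m)

theorem shiftRel_iff_periodCode {x y : ℤ → ℕ → Bool} (hx : periods (germ x) ≠ ⊥)
    (hy : periods (germ y) ≠ ⊥) :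
    ShiftRel E0 x y ↔ ∀ᶠ m in atTop, periodCode x m = periodCode y m := by
  obtain ⟨hp, hxp⟩ : 0 < leastPeriod x ∧ Periodic (germ x) (leastPeriod x) :=
    leastPositive_spec hx
  have hyp : Periodic (germ y) (leastPeriod y) := (leastPositive_spec hy).2
  rw [shiftRel_e0_iff]
  constructor
  · intro h
    have hpq : leastPeriod y = leastPeriod x := by rw [leastPeriod, leastPeriod, h.periods_eq]
    rw [hpq] at hyp
    obtain ⟨k, hk⟩ := (shiftRel_iff_of_periodic hp hxp hyp).1 h
    filter_upwards [blockCode_eventuallyEq hp (length_col x _)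
      (eventually_col_eq_rotate_iff.2 hk)] with m hm
    simp [periodCode, hpq, hm]
  · intro h
    have hcodes := h.mono fun m hm => Prod.mk.inj (Encodable.encode_injective hm)
    obtain ⟨m, hpq, -⟩ := hcodes.exists
    rw [← hpq] at hyp
    have hmov : ∀ k, 0 < k → k < leastPeriod x →
        ∃ᶠ c in atTop, (col x (leastPeriod x) c).rotate k ≠ col x (leastPeriod x) c :=
      fun k hk hkp => frequently_rotate_col_ne hp hxp (not_mem_of_lt_leastPositive hk hkp)
    obtain ⟨k, hk⟩ := exists_eventually_eq_rotate hp hmov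
      (hcodes.mono fun m hm => by simpa [← hpq] using hm.2)
    exact (shiftRel_iff_of_periodic hp hxp hyp).2 ⟨k, eventually_col_eq_rotate_iff.1 hk⟩

def exactPart (x : ℤ → ℕ → Bool) (n : ℤ) : ℤ ⊕ (ℤ × ℤ) → Bool
  | .inl m => decide (periods (germ x) ≠ ⊥ ∧ m = n)
  | .inr q => decide (periods (germ x) = ⊥ ∧ germ x (n + q.1) = germ x (n + q.2))

def windowLength (x : ℤ → ℕ → Bool) : ℕ := max (leastPositive (patternPeriods (germ x))) 1

def approxPart (x : ℤ → ℕ → Bool) (n : ℤ) : ℕ → Bool :=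
  if periods (germ x) = ⊥ then window (windowLength x) x n else unaryCode (periodCode x)

def reduction (x : ℤ → ℕ → Bool) (n : ℤ) : ℕ → Bool := tagged (exactPart x n) (approxPart x n)

theorem exactPart_eq_iff {x y : ℤ → ℕ → Bool} {m n : ℤ} :
    exactPart x m = exactPart y n ↔
      (∀ k, periods (germ x) ≠ ⊥ ∧ k = m ↔ periods (germ y) ≠ ⊥ ∧ k = n) ∧
      ∀ i j, (periods (germ x) = ⊥ ∧ germ x (m + i) = germ x (m + j) ↔
        periods (germ y) = ⊥ ∧ germ y (n + i) = germ y (n + j)) := by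
  simp only [funext_iff, Sum.forall, Prod.forall, exactPart, decide_eq_decide]

theorem periods_eq_bot_iff_of_e0 {x y : ℤ → ℕ → Bool} {m n : ℤ}
    (h : E0 (reduction x m) (reduction y n)) : periods (germ x) = ⊥ ↔ periods (germ y) = ⊥ := by
  obtain ⟨hk, hpat⟩ := exactPart_eq_iff.1 (e0_tagged_iff.1 h).1
  by_cases hx : periods (germ x) = ⊥
  · simpa [hx] using hpat 0 0
  · simp [hx, ((hk m).1 ⟨hx, rfl⟩).1]

theorem e0_reduction_iff_of_ne_bot {x y : ℤ → ℕ → Bool} (hx : periods (germ x) ≠ ⊥)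
    (hy : periods (germ y) ≠ ⊥) {m n : ℤ} :
    E0 (reduction x m) (reduction y n) ↔
      m = n ∧ ∀ᶠ c in atTop, periodCode x c = periodCode y c := by
  simp [reduction, e0_tagged_iff, exactPart_eq_iff, approxPart, hx, hy, e0_unaryCode_iff]

theorem e0_reduction_iff_of_eq_bot {x y : ℤ → ℕ → Bool} (hx : periods (germ x) = ⊥)
    (hy : periods (germ y) = ⊥) {m n : ℤ} :
    E0 (reduction x m) (reduction y n) ↔
      (∀ i j, germ x (m + i) = germ x (m + j) ↔ germ y (n + i) = germ y (n + j)) ∧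
      E0 (window (windowLength x) x m) (window (windowLength y) y n) := by
  simp [reduction, e0_tagged_iff, exactPart_eq_iff, approxPart, hx, hy]

theorem not_e0_reduction (x : ℤ → ℕ → Bool) {m n : ℤ} (hmn : m ≠ n) :
    ¬E0 (reduction x m) (reduction x n) := by
  by_cases hx : periods (germ x) = ⊥
  · intro h
    obtain ⟨hpat, hwin⟩ := (e0_reduction_iff_of_eq_bot hx hx).1 h
    exact hmn (eq_of_pattern_of_window hx hpat fun i hi =>
      e0_iff_germ_eq.1 (e0_window_iff.1 hwin i hi))
  · exact fun h => hmn ((e0_reduction_iff_of_ne_bot hx hx).1 h).1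

theorem shiftRel_reduction_iff_of_eq_bot {x y : ℤ → ℕ → Bool} (hx : periods (germ x) = ⊥)
    (hy : periods (germ y) = ⊥) : ShiftRel E0 (reduction x) (reduction y) ↔ ShiftRel E0 x y := by
  constructor
  · rintro ⟨γ, h⟩
    refine ⟨γ, fun a => ?_⟩
    obtain ⟨hpat, hwin⟩ := (e0_reduction_iff_of_eq_bot hx hy).1 (h a)
    rw [windowLength, windowLength, patternPeriods_eq_of_pattern hpat, e0_window_iff] at hwin
    simpa using hwin 0 (by simp)
  · rintro ⟨γ, hγ⟩
    have hshift : ∀ b, germ x (b - γ) = germ y b := fun b => e0_iff_germ_eq.1 (hγ b)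
    refine ⟨γ, fun a => (e0_reduction_iff_of_eq_bot hx hy).2 ⟨fun i j => ?_, ?_⟩⟩
    · rw [← hshift, ← hshift, sub_add_eq_add_sub, sub_add_eq_add_sub]
    · rw [windowLength, windowLength, (shiftRel_e0_iff.1 ⟨γ, hγ⟩).patternPeriods_eq,
        e0_window_iff]
      exact fun i _ => by simpa [sub_add_eq_add_sub] using hγ (a + i)

theorem shiftRel_reduction_iff (x y : ℤ → ℕ → Bool) :
    ShiftRel E0 (reduction x) (reduction y) ↔ ShiftRel E0 x y := by
  by_cases hxy : periods (germ x) = ⊥ ↔ periods (germ y) = ⊥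
  · by_cases hx : periods (germ x) = ⊥
    · exact shiftRel_reduction_iff_of_eq_bot hx (hxy.1 hx)
    · have hy := (not_congr hxy).1 hx
      rw [shiftRel_iff_periodCode hx hy]
      simp only [ShiftRel, e0_reduction_iff_of_ne_bot hx hy, sub_eq_self]
      exact ⟨fun ⟨γ, h⟩ => (h 0).2, fun h => ⟨0, fun _ => ⟨rfl, h⟩⟩⟩
  · refine iff_of_false (fun ⟨γ, h⟩ => hxy (periods_eq_bot_iff_of_e0 (h 0))) fun h => hxy ?_
    rw [(shiftRel_e0_iff.1 h).periods_eq]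

section Measurability

variable {α : Type*} [MeasurableSpace α]

local instance {β : Type*} : MeasurableSpace (List β) := ⊤

theorem measurable_e0 {φ ψ : α → ℕ → Bool} (hφ : Measurable φ) (hψ : Measurable ψ) :
    Measurable fun a => E0 (φ a) (ψ a) := by
  simp only [E0, eventually_atTop]
  exact Measurable.exists fun N => Measurable.forall fun n => measurable_const.imp
    (measurableSet_setOfPred.1 (measurableSet_eq_fun ((measurable_pi_apply n).comp hφ)
      ((measurable_pi_apply n).comp hψ)))

theorem measurable_sInf_setOf {P : α → ℕ → Prop} (hP : ∀ n, Measurable (P · n)) :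
    Measurable fun a => sInf {n | P a n} := by
  have hex : ∀ a, ∃ n, P a n ∨ ∀ k, ¬P a k := fun a => (em (∃ n, P a n)).elim
    (fun ⟨n, hn⟩ => ⟨n, Or.inl hn⟩) fun h => ⟨0, Or.inr (not_exists.1 h)⟩
  have key : ∀ a, sInf {n | P a n} = Nat.find (hex a) := fun a => by
    by_cases h : ∃ n, P a n
    · rw [Nat.sInf_def (s := {n | P a n}) h]
      exact Nat.find_congr' fun {n} => (or_iff_left fun hn => absurd h (not_exists.2 hn)).symm
    · rw [Nat.sInf_eq_zero (s := {n | P a n}).2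
        (Or.inr (Set.eq_empty_of_forall_notMem (not_exists.1 h))),
        eq_comm, Nat.find_eq_zero]
      exact Or.inr (not_exists.1 h)
  simp only [key]
  exact measurable_find _ fun n => ((hP n).or (Measurable.forall fun k => (hP k).not)).setOf

theorem measurable_leastPositive {H : α → AddSubgroup ℤ}
    (hH : ∀ d : ℤ, Measurable fun a => d ∈ H a) : Measurable fun a => leastPositive (H a) :=
  measurable_sInf_setOf fun d => measurable_const.and (hH d)

theorem measurable_decide {P : α → Prop} [DecidablePred P] (hP : Measurable P) :
    Measurable fun a => decide (P a) := by
  convert (Measurable.of_discrete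
    (f := fun q : Prop => @decide q (Classical.propDecidable q))).comp hP using 2
  exact decide_eq_decide.2 Iff.rfl

theorem measurable_pack {Z : α → ℕ → ℕ → Bool} (hZ : ∀ i j, Measurable fun a => Z a i j) :
    Measurable fun a => pack (Z a) :=
  measurable_pi_lambda _ fun _ => hZ _ _

theorem measurable_tagged {ι : Type*} [Denumerable ι] {e : α → ι → Bool} {v : α → ℕ → Bool}
    (he : ∀ i, Measurable fun a => e a i) (hv : Measurable v) :
    Measurable fun a => tagged (e a) (v a) :=
  measurable_pack fun i j => by
    cases i
    exacts [(measurable_pi_apply j).comp hv, he _]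

theorem measurable_list_map {ι β : Type*} [MeasurableSpace β] [Countable β]
    [MeasurableSingletonClass β] {f : ι → α → β} (hf : ∀ i, Measurable (f i)) (l : List ι) :
    Measurable fun a => l.map (f · a) := by
  induction l with
  | nil => exact measurable_const
  | cons i l ih =>
    exact (Measurable.of_discrete (f := fun q : β × List β => q.1 :: q.2)).comp ((hf i).prodMk ih)

theorem measurable_germ_eq (i j : ℤ) : Measurable fun x : ℤ → ℕ → Bool => germ x i = germ x j := by
  simp only [← e0_iff_germ_eq]
  exact measurable_e0 (measurable_pi_apply i) (measurable_pi_apply j)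

theorem measurable_mem_periods (c : ℤ) :
    Measurable fun x : ℤ → ℕ → Bool => c ∈ periods (germ x) :=
  Measurable.forall fun n => measurable_germ_eq (n + c) n

theorem measurable_mem_patternPeriods (d : ℤ) :
    Measurable fun x : ℤ → ℕ → Bool => d ∈ patternPeriods (germ x) :=
  Measurable.forall fun i => Measurable.forall fun j =>
    (measurable_germ_eq (i + d) (j + d)).iff (measurable_germ_eq i j)

theorem measurable_periods_eq_bot : Measurable fun x : ℤ → ℕ → Bool => periods (germ x) = ⊥ := by
  simp only [AddSubgroup.eq_bot_iff_forall]
  exact Measurable.forall fun c => (measurable_mem_periods c).imp measurable_const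

theorem measurable_col (p c : ℕ) : Measurable fun x : ℤ → ℕ → Bool => col x p c :=
  measurable_list_map (fun r : ℕ => (measurable_pi_apply c).comp (measurable_pi_apply (r : ℤ))) _

theorem measurable_firstMoved (p k m : ℕ) :
    Measurable fun x : ℤ → ℕ → Bool => firstMoved (col x p) k m :=
  (measurable_sInf_setOf fun i =>
    (Measurable.of_discrete (f := fun l : List Bool => l.rotate k ≠ l)).comp
      (measurable_col p (m + i))).const_add m

theorem measurable_block (p m : ℕ) : Measurable fun x : ℤ → ℕ → Bool => block (col x p) p m :=
  measurable_list_map (fun _ => (measurable_from_prod_countable_left (f := fun q => col q.1 p q.2)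
    fun c => measurable_col p c).comp (measurable_id.prodMk (measurable_firstMoved p _ _))) _

theorem measurable_periodCode (m : ℕ) : Measurable fun x => periodCode x m :=
  (measurable_from_prod_countable_left
    (f := fun q : (ℤ → ℕ → Bool) × ℕ => Encodable.encode (q.2, blockCode (col q.1 q.2) q.2 m))
    fun p => (Measurable.of_discrete (f := fun B => Encodable.encode (p, rotOrbit p B))).comp
      (measurable_block p m)).comp
    (measurable_id.prodMk (measurable_leastPositive measurable_mem_periods))

theorem measurable_approxPart (n : ℤ) : Measurable fun x => approxPart x n := by
  refine Measurable.ite measurable_periods_eq_bot.setOf (measurable_pack fun i j => ?_)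
    (measurable_pack fun m j => measurable_decide
      ((Measurable.of_discrete (f := (j < ·))).comp (measurable_periodCode m)))
  refine (measurable_pi_apply j).comp (Measurable.ite ?_ (measurable_pi_apply _) measurable_const)
  exact ((Measurable.of_discrete (f := (i < ·))).comp
    ((measurable_leastPositive measurable_mem_patternPeriods).max measurable_const)).setOf

theorem measurable_exactPart (n : ℤ) (i : ℤ ⊕ (ℤ × ℤ)) : Measurable fun x => exactPart x n i := by
  rcases i with m | q <;> simp only [exactPart]
  exacts [measurable_decide (measurable_periods_eq_bot.not.and measurable_const),
    measurable_decide (measurable_periods_eq_bot.and (measurable_germ_eq _ _))]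

theorem measurable_reduction : Measurable reduction :=
  measurable_pi_lambda _ fun n =>
    measurable_tagged (measurable_exactPart n) (measurable_approxPart n)

end Measurability

theorem gammaJump_iff_shiftRel {X : Type*} (E : X → X → Prop)
    (x y : Multiplicative ℤ → X) :
    GammaJump (Multiplicative ℤ) E x y ↔
      ShiftRel E (x ∘ Multiplicative.ofAdd) (y ∘ Multiplicative.ofAdd) := by
  constructor
  · rintro ⟨γ, h⟩
    exact ⟨γ.toAdd, fun a => by simpa [sub_eq_neg_add] using h (.ofAdd a)⟩
  · rintro ⟨γ, h⟩
    exact ⟨.ofAdd γ, fun α => by simpa [sub_eq_neg_add] using h α.toAdd⟩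

end E0ZJump
end

open E0ZJump Multiplicative in
/-- `E₀^{[ℤ]}` is Borel reducible to its pairwise-inequivalent part. -/
theorem e0_zJump_borelReducible_pi_part :
    BorelReducible (GammaJump (Multiplicative ℤ) E0)
      (fun a b : PIPart (Multiplicative ℤ) E0 =>
        GammaJump (Multiplicative ℤ) E0 a.1 b.1) := by
  let Φ : (Multiplicative ℤ → ℕ → Bool) → Multiplicative ℤ → ℕ → Bool :=
    fun x => reduction (x ∘ ofAdd) ∘ toAdd
  have hΦ : Measurable Φ := measurable_pi_lambda _ fun α => (measurable_pi_apply α.toAdd).comp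
    (measurable_reduction.comp (measurable_pi_lambda _ fun n => measurable_pi_apply (ofAdd n)))
  refine ⟨fun x => ⟨Φ x, fun γ δ hγδ => not_e0_reduction _ (toAdd.injective.ne hγδ)⟩,
    hΦ.subtype_mk, fun x x' => ?_⟩
  exact (gammaJump_iff_shiftRel E0 x x').trans
    ((shiftRel_reduction_iff _ _).symm.trans (gammaJump_iff_shiftRel E0 (Φ x) (Φ x')).symm)
end

section
/- For every countable group Γ and every countable ordinal α, F_2 is not Borel reducible to the iterated Γ-jump J^α_Γ of the identity relation Δ(2). -/
/-- A (Borel) equivalence relation: a carrier with a σ-algebra and a binary relation. -/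
structure BorelEqvRel : Type 2 where
  carrier : Type 1
  ms : MeasurableSpace carrier
  rel : carrier → carrier → Prop

/-- Borel reducibility between packaged equivalence relations. -/
def RedB (E F : BorelEqvRel) : Prop :=
  ∃ f : E.carrier → F.carrier, @Measurable _ _ E.ms F.ms f ∧
    ∀ x y, E.rel x y ↔ F.rel (f x) (f y)

/-- The Γ-jump of a packaged equivalence relation. -/
def jumpB (Γ : Type) [Group Γ] (R : BorelEqvRel) : BorelEqvRel where
  carrier := Γ → R.carrier
  ms := @MeasurableSpace.pi _ _ (fun _ => R.ms)
  rel := GammaJump Γ R.rel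

/-- The direct sum of a family of packaged equivalence relations. -/
def sumB {ι : Type 1} (f : ι → BorelEqvRel) : BorelEqvRel where
  carrier := Σ i : ι, (f i).carrier
  ms := letI := fun i => (f i).ms; inferInstance
  rel a b := ∃ (i : ι) (x y : (f i).carrier), (f i).rel x y ∧ a = ⟨i, x⟩ ∧ b = ⟨i, y⟩

/-- The Friedman–Stanley jump of a packaged equivalence relation. -/
def fsJumpB (R : BorelEqvRel) : BorelEqvRel where
  carrier := ℕ → R.carrier
  ms := @MeasurableSpace.pi _ _ (fun _ => R.ms)
  rel x y :=
    Set.range (fun n => {z | R.rel (x n) z}) = Set.range (fun n => {z | R.rel (y n) z})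

/-- The iterated Γ-jumps of `E`: `J^0 = E`, `J^{α+1} = (J^α)^{[Γ]}`, and
`J^λ = (⊕_{α<λ} J^α)^{[Γ]}` for limit `λ`. -/
noncomputable def iterJump (Γ : Type) [Group Γ] (E : BorelEqvRel) (o : Ordinal) :
    BorelEqvRel :=
  Ordinal.limitRecOn o E (fun _ ih => jumpB Γ ih)
    (fun o _ ih => jumpB Γ (sumB (fun i : {β : Ordinal // β < o} => ih i.1 i.2)))

/-- `Δ(2)`: the identity relation on a two-element set. -/
def deltaTwo : BorelEqvRel := ⟨ULift Bool, ⊤, Eq⟩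

/-- The Friedman–Stanley tower: `F_0 = Δ(ω)`, `F_{α+1} = (F_α)⁺`, and
`F_λ = (⊕_{α<λ} F_α)⁺` for limit `λ`. -/
noncomputable def FStower (o : Ordinal) : BorelEqvRel :=
  Ordinal.limitRecOn o ⟨ULift ℕ, ⊤, Eq⟩ (fun _ ih => fsJumpB ih)
    (fun o _ ih => fsJumpB (sumB (fun i : {β : Ordinal // β < o} => ih i.1 i.2)))

/-!
Call a Borel equivalence relation `R` *pinned* if, whenever Baire measurable maps `H`, `H'`
defined on the space of generic objects for the collapse of the continuum to `ℵ₀` take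
`R`-related values at the two halves of a generic point of a product `U × U'`, the map `H` is
generically `R`-equivalent on `U` to a single point. `Δ(2)` is pinned; a countable direct sum of
pinned relations is pinned, since the summand is generically constant; and the `Γ`-jump of a pinned
relation is pinned for countable `Γ`: one shift `γ` witnesses the jump on a nonmeagre, hence locally
comeagre, set, there the coordinates are pinned one at a time, and local pins cohere by a
three-fold product argument. So every `J^α_Γ` with `α` countable is pinned. `F₂` is not: a generic
`w : ℕ → (ℕ → ℕ)` codes the countable family `{range (w n)}`; a reduction of `F₂` to a pinned
relation would make all generic families equal to one family `{range (w₀ n)}`, while a generic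
family contains the range of any given column, against Cantor's theorem.
-/

open Set Filter Topology Function MeasureTheory

section Box

variable {A I I' : Type*}

/-- The box `U × U'` inside `(I ⊕ I' → A) ≃ (I → A) × (I' → A)`. -/
def box (U : Set (I → A)) (U' : Set (I' → A)) : Set (I ⊕ I' → A) :=
  {v | v ∘ Sum.inl ∈ U ∧ v ∘ Sum.inr ∈ U'}

theorem nonempty_box {U : Set (I → A)} {U' : Set (I' → A)} (hU : U.Nonempty)
    (hU' : U'.Nonempty) : (box U U').Nonempty :=
  let ⟨x, hx⟩ := hU
  let ⟨x', hx'⟩ := hU'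
  ⟨Sum.elim x x', hx, hx'⟩

theorem box_mono {U V : Set (I → A)} {U' V' : Set (I' → A)} (h : V ⊆ U) (h' : V' ⊆ U') :
    box V V' ⊆ box U U' :=
  fun _ hv => ⟨h hv.1, h' hv.2⟩

end Box

section Product

variable {A : Type*} [TopologicalSpace A] {I I' K : Type*}

theorem isOpenMap_comp_right {j : I → K} (hj : Injective j) :
    IsOpenMap (fun v : K → A => v ∘ j) := by
  classical
  refine IsOpenMap.of_sections fun v =>
    ⟨fun u => extend j u v, ?_, ?_, fun u => extend_comp hj u v⟩
  · refine (continuous_pi fun k => ?_).continuousAt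
    by_cases hk : ∃ i, j i = k
    · obtain ⟨i, rfl⟩ := hk
      simpa only [hj.extend_apply] using continuous_apply i
    · simpa only [extend_apply' _ _ _ hk] using continuous_const
  · funext k
    by_cases hk : ∃ i, j i = k
    · obtain ⟨i, rfl⟩ := hk
      exact hj.extend_apply _ _ _
    · exact extend_apply' _ _ _ hk

theorem tendsto_comp_right_residual {j : I → K} (hj : Injective j) :
    Tendsto (fun v : K → A => v ∘ j) (residual (K → A)) (residual (I → A)) :=
  tendsto_residual_of_isOpenMap (by fun_prop) (isOpenMap_comp_right hj)

theorem tendsto_comp_right_residual_inf_principal {j : I → K} (hj : Injective j)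
    {B : Set (K → A)} {U : Set (I → A)} (hBU : MapsTo (· ∘ j) B U) :
    Tendsto (fun v : K → A => v ∘ j) (residual (K → A) ⊓ 𝓟 B) (residual (I → A) ⊓ 𝓟 U) :=
  (tendsto_comp_right_residual hj).inf (tendsto_principal_principal.mpr hBU)

theorem eventually_box_left {U : Set (I → A)} {U' : Set (I' → A)} {p : (I → A) → Prop}
    (h : ∀ᶠ w in residual _ ⊓ 𝓟 U, p w) :
    ∀ᶠ v in residual _ ⊓ 𝓟 (box U U'), p (v ∘ Sum.inl) :=
  (tendsto_comp_right_residual_inf_principal Sum.inl_injective fun _ hv => hv.1).eventually h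

theorem eventually_box_right {U : Set (I → A)} {U' : Set (I' → A)} {p : (I' → A) → Prop}
    (h : ∀ᶠ w in residual _ ⊓ 𝓟 U', p w) :
    ∀ᶠ v in residual _ ⊓ 𝓟 (box U U'), p (v ∘ Sum.inr) :=
  (tendsto_comp_right_residual_inf_principal Sum.inr_injective fun _ hv => hv.2).eventually h

theorem IsOpen.exists_finset_update_mem [DecidableEq K] {U : Set (K → A)} (hU : IsOpen U)
    {x : K → A} (hx : x ∈ U) : ∃ s : Finset K, ∀ k ∉ s, ∀ a, update x k a ∈ U := by
  obtain ⟨s, u, hu, hsub⟩ := isOpen_pi_iff.mp hU x hx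
  refine ⟨s, fun k hk a => hsub fun i hi => ?_⟩
  rw [update_of_ne (ne_of_mem_of_not_mem hi hk)]
  exact (hu i hi).2

theorem isOpen_box {U : Set (I → A)} {U' : Set (I' → A)} (hU : IsOpen U) (hU' : IsOpen U') :
    IsOpen (box U U') :=
  (hU.preimage (by fun_prop)).inter (hU'.preimage (by fun_prop))

theorem IsOpen.exists_box_subset {O : Set (I ⊕ I' → A)} (hO : IsOpen O) (hne : O.Nonempty) :
    ∃ C C', IsOpen C ∧ C.Nonempty ∧ IsOpen C' ∧ C'.Nonempty ∧ box C C' ⊆ O := by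
  obtain ⟨v, hv⟩ := hne
  have hOpen : IsOpen ((fun p : (I → A) × (I' → A) => Sum.elim p.1 p.2) ⁻¹' O) :=
    hO.preimage <| continuous_pi fun k => by
      cases k <;> simp only [Sum.elim_inl, Sum.elim_inr] <;> fun_prop
  obtain ⟨C, C', hC, hC', hvC, hvC', hsub⟩ :=
    isOpen_prod_iff.mp hOpen (v ∘ Sum.inl) (v ∘ Sum.inr) (by simpa using hv)
  refine ⟨C, C', hC, ⟨_, hvC⟩, hC', ⟨_, hvC'⟩, fun w hw => ?_⟩
  simpa using hsub (mk_mem_prod hw.1 hw.2)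

end Product

section Residual

variable {X : Type*} [TopologicalSpace X] {U : Set X}

theorem neBot_residual_inf_principal [BaireSpace X] (hU : IsOpen U) (hne : U.Nonempty) :
    (residual X ⊓ 𝓟 U).NeBot :=
  inf_principal_neBot_iff.mpr fun _ hS =>
    inter_comm U _ ▸ (dense_of_mem_residual hS).inter_open_nonempty U hU hne

theorem residual_inf_principal_mono {V : Set X} (h : V ⊆ U) :
    residual X ⊓ 𝓟 V ≤ residual X ⊓ 𝓟 U :=
  inf_le_inf_left _ (principal_mono.mpr h)

theorem BaireMeasurableSet.exists_eventually_mem {S : Set X} (hS : BaireMeasurableSet S)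
    (hU : IsOpen U) (h : ∃ᶠ x in residual X ⊓ 𝓟 U, x ∈ S) :
    ∃ V ⊆ U, IsOpen V ∧ V.Nonempty ∧ ∀ᶠ x in residual X ⊓ 𝓟 V, x ∈ S := by
  obtain ⟨u, hu, hSu⟩ := hS.residualEq_isOpen
  have hSu' : ∀ᶠ x in residual X, x ∈ S ↔ x ∈ u := eventuallyEq_set.mp hSu
  refine ⟨u ∩ U, inter_subset_right, hu.inter hU, ?_, ?_⟩
  · by_contra hempty
    exact h <| eventually_inf_principal.mpr <|
      hSu'.mono fun x hx hxU hxS => hempty ⟨x, hx.mp hxS, hxU⟩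
  · exact eventually_inf_principal.mpr (hSu'.mono fun x hx hxV => hx.mpr hxV.1)

end Residual

theorem Filter.exists_frequently_eq {α κ : Type*} [Countable κ] {l : Filter α}
    [CountableInterFilter l] [l.NeBot] (φ : α → κ) : ∃ c, ∃ᶠ x in l, φ x = c := by
  by_contra! h
  obtain ⟨x, hx⟩ := (eventually_countable_forall.mpr h).exists
  exact hx _ rfl

theorem Filter.eventually_eq_of_frequently_eq {α κ : Type*} [Countable κ] {l : Filter α}
    [CountableInterFilter l] {φ : α → κ} {c : κ} (h : ∀ d, (∃ᶠ x in l, φ x = d) → d = c) :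
    ∀ᶠ x in l, φ x = c := by
  have hd : ∀ d, ∀ᶠ x in l, φ x = d → d = c := fun d => by
    by_cases hfreq : ∃ᶠ x in l, φ x = d
    · exact Eventually.of_forall fun _ _ => h d hfreq
    · exact (not_frequently.mp hfreq).mono fun _ hx hx' => absurd hx' hx
  exact (eventually_countable_forall.mpr hd).mono fun x hx => hx _ rfl

section Discrete

variable {A K : Type*} [TopologicalSpace A] [DiscreteTopology A] {S : Set K}

theorem eventually_residual_exists_apply_eq (hS : S.Infinite) (a : A) :
    ∀ᶠ v in residual (K → A), ∃ k ∈ S, v k = a := by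
  classical
  refine residual_of_dense_open ?_ (dense_iff_inter_open.mpr fun U hU hne => ?_)
  · have : {v : K → A | ∃ k ∈ S, v k = a} = ⋃ k ∈ S, (fun v => v k) ⁻¹' {a} := by ext; simp
    rw [this]
    exact isOpen_biUnion fun k _ => (isOpen_discrete {a}).preimage (continuous_apply k)
  · obtain ⟨x, hx⟩ := hne
    obtain ⟨s, hs⟩ := IsOpen.exists_finset_update_mem hU hx
    obtain ⟨k, hkS, hks⟩ := hS.exists_notMem_finset s
    exact ⟨update x k a, hs k hks a, k, hkS, update_self k a x⟩

theorem eventually_residual_exists_apply_eq_apply (hS : S.Infinite) (i : K) :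
    ∀ᶠ v in residual (K → A), ∃ k ∈ S, v k = v i := by
  classical
  refine residual_of_dense_open ?_ (dense_iff_inter_open.mpr fun U hU hne => ?_)
  · have : {v : K → A | ∃ k ∈ S, v k = v i} = ⋃ k ∈ S, {v | v k = v i} := by ext; simp
    rw [this]
    exact isOpen_biUnion fun k _ => isOpen_discrete {p : A × A | p.1 = p.2} |>.preimage
      (f := fun v : K → A => (v k, v i)) (by fun_prop)
  · obtain ⟨x, hx⟩ := hne
    obtain ⟨s, hs⟩ := IsOpen.exists_finset_update_mem hU hx
    obtain ⟨k, hkS, hks⟩ := hS.exists_notMem_finset (insert i s)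
    rw [Finset.mem_insert, not_or] at hks
    exact ⟨update x k (x i), hs k hks.2 _, k, hkS,
      by rw [update_self, update_of_ne (Ne.symm hks.1)]⟩

end Discrete

abbrev baireMeasurableSpace (X : Type*) [TopologicalSpace X] : MeasurableSpace X :=
  eventuallyMeasurableSpace (borel X) (residual X)

theorem measurable_comp_right_baire {A I K : Type*} [TopologicalSpace A] {j : I → K}
    (hj : Injective j) :
    Measurable[baireMeasurableSpace (K → A), baireMeasurableSpace (I → A)] (· ∘ j) :=
  fun _ hS => BaireMeasurableSet.preimage (by fun_prop) (isOpenMap_comp_right hj) hS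

/-- Columns `ℕ → ℕ` with the discrete topology: the product `I → Col` is the space of generic
objects for the collapse of the continuum to `ℵ₀`, a generic `w : ℕ → Col` coding the countable
family of sets `range (w n)`. -/
def Col : Type 1 := ℕ → ULift.{1} ℕ

instance : TopologicalSpace Col := ⊥

instance : DiscreteTopology Col := ⟨rfl⟩

instance : Inhabited Col := ⟨fun _ => ⟨0⟩⟩

abbrev Cohen (I : Type) : Type 1 := I → Col

section Generic

variable {I I' : Type} [Countable I] [Countable I']

theorem exists_eventually_eq_of_countable {κ : Type*} [Countable κ]
    {H : Cohen I → κ} {H' : Cohen I' → κ}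
    (hH : ∀ c, BaireMeasurableSet {w | H w = c}) (hH' : ∀ c, BaireMeasurableSet {w | H' w = c})
    {U : Set (Cohen I)} {U' : Set (Cohen I')} (hU : IsOpen U) (hUne : U.Nonempty)
    (hU' : IsOpen U') (hU'ne : U'.Nonempty)
    (hcross : ∀ᶠ v in residual _ ⊓ 𝓟 (box U U'), H (v ∘ Sum.inl) = H' (v ∘ Sum.inr)) :
    ∃ c, (∀ᶠ w in residual _ ⊓ 𝓟 U, H w = c) ∧ ∀ᶠ w in residual _ ⊓ 𝓟 U', H' w = c := by
  have key : ∀ c c', (∃ᶠ w in residual _ ⊓ 𝓟 U, H w = c) →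
      (∃ᶠ w in residual _ ⊓ 𝓟 U', H' w = c') → c = c' := by
    intro c c' hc hc'
    obtain ⟨V, hVU, hV, hVne, hVc⟩ := (hH c).exists_eventually_mem hU hc
    obtain ⟨V', hV'U', hV', hV'ne, hV'c⟩ := (hH' c').exists_eventually_mem hU' hc'
    have := neBot_residual_inf_principal (isOpen_box hV hV') (nonempty_box hVne hV'ne)
    have h₃ := hcross.filter_mono (residual_inf_principal_mono (box_mono hVU hV'U'))
    obtain ⟨v, e₁, e₂, e₃⟩ :=
      ((eventually_box_left (U' := V') hVc).and
        ((eventually_box_right (U := V) hV'c).and h₃)).exists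
    exact e₁.symm.trans (e₃.trans e₂)
  have := neBot_residual_inf_principal hU hUne
  have := neBot_residual_inf_principal hU' hU'ne
  obtain ⟨c, hc⟩ := exists_frequently_eq (l := residual _ ⊓ 𝓟 U) H
  obtain ⟨c', hc'⟩ := exists_frequently_eq (l := residual _ ⊓ 𝓟 U') H'
  obtain rfl := key c c' hc hc'
  exact ⟨c, eventually_eq_of_frequently_eq fun d hd => key d c hd hc',
    eventually_eq_of_frequently_eq fun d hd => (key c d hc hd).symm⟩

variable {X : Type*} {r : X → X → Prop} {H : Cohen I → X} {H' : Cohen I' → X}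
  {U : Set (Cohen I)} {U' : Set (Cohen I')}

/-- Compare both pins with `H'` at a common generic point of `C₁ × C₂ × U'`. -/
theorem rel_of_local_pins (hr : Equivalence r) (hU' : IsOpen U') (hU'ne : U'.Nonempty)
    (hcross : ∀ᶠ v in residual _ ⊓ 𝓟 (box U U'), r (H (v ∘ Sum.inl)) (H' (v ∘ Sum.inr)))
    {C₁ C₂ : Set (Cohen I)} (hC₁ : IsOpen C₁) (hC₁ne : C₁.Nonempty) (hC₁U : C₁ ⊆ U)
    (hC₂ : IsOpen C₂) (hC₂ne : C₂.Nonempty) (hC₂U : C₂ ⊆ U) {y₁ y₂ : X}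
    (h₁ : ∀ᶠ w in residual _ ⊓ 𝓟 C₁, r (H w) y₁) (h₂ : ∀ᶠ w in residual _ ⊓ 𝓟 C₂, r (H w) y₂) :
    r y₁ y₂ := by
  let e : I ⊕ I' → I ⊕ (I ⊕ I') := Sum.elim Sum.inl (Sum.inr ∘ Sum.inr)
  have he : Injective e :=
    Sum.inl_injective.sumElim (Sum.inr_injective.comp Sum.inr_injective) (by simp)
  have := neBot_residual_inf_principal (isOpen_box hC₁ (isOpen_box hC₂ hU'))
    (nonempty_box hC₁ne (nonempty_box hC₂ne hU'ne))
  have m₁ := eventually_box_left (U' := box C₂ U') h₁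
  have m₂ := eventually_box_right (U := C₁) (eventually_box_left (U' := U') h₂)
  have m₃ := (tendsto_comp_right_residual_inf_principal (B := box C₁ (box C₂ U'))
    (U := box U U') he fun _ hv => ⟨hC₁U hv.1, hv.2.2⟩).eventually hcross
  have m₄ := eventually_box_right (U := C₁)
    (hcross.filter_mono (residual_inf_principal_mono (box_mono hC₂U subset_rfl)))
  obtain ⟨v, e₁, e₂, e₃, e₄⟩ := (m₁.and (m₂.and (m₃.and m₄))).exists
  exact hr.trans (hr.symm e₁) (hr.trans e₃ (hr.trans (hr.symm e₄) e₂))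

theorem exists_pin_of_local_pins (hr : Equivalence r)
    (hclass : ∀ y, BaireMeasurableSet {w | r (H w) y}) (hU : IsOpen U) (hUne : U.Nonempty)
    (hU' : IsOpen U') (hU'ne : U'.Nonempty)
    (hcross : ∀ᶠ v in residual _ ⊓ 𝓟 (box U U'), r (H (v ∘ Sum.inl)) (H' (v ∘ Sum.inr)))
    (hloc : ∀ V ⊆ U, IsOpen V → V.Nonempty →
      ∃ C ⊆ V, IsOpen C ∧ C.Nonempty ∧ ∃ y, ∀ᶠ w in residual _ ⊓ 𝓟 C, r (H w) y) :
    ∃ y, ∀ᶠ w in residual _ ⊓ 𝓟 U, r (H w) y := by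
  obtain ⟨C₀, hC₀U, hC₀, hC₀ne, y₀, hy₀⟩ := hloc U subset_rfl hU hUne
  refine ⟨y₀, by_contra fun hbad => ?_⟩
  obtain ⟨V, hVU, hV, hVne, hVbad⟩ :=
    (hclass y₀).compl.exists_eventually_mem hU (not_eventually.mp hbad)
  obtain ⟨C, hCV, hC, hCne, y, hy⟩ := hloc V hVU hV hVne
  have hyy₀ : r y y₀ := rel_of_local_pins hr hU' hU'ne hcross hC hCne (hCV.trans hVU)
    hC₀ hC₀ne hC₀U hy hy₀
  have := neBot_residual_inf_principal hC hCne
  obtain ⟨w, hw, hw'⟩ := ((hy.mono fun w hw => hr.trans hw hyy₀).and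
    (hVbad.filter_mono (residual_inf_principal_mono hCV))).exists
  exact hw' hw

end Generic

theorem measurableSet_setOf_rel_right {X : Type*} [MeasurableSpace X] {r : X → X → Prop}
    (hr : MeasurableSet {p : X × X | r p.1 p.2}) (y : X) : MeasurableSet {x | r x y} :=
  measurable_prodMk_right hr

/-- `R` is *pinned* for the collapse of the continuum to `ℵ₀`. Reading `H`, `H'` as names for
elements of `R.carrier` in a generic extension by a point of `Cohen I`: if the two names, evaluated
at the two halves of a generic point of `U × U'`, are `R`-related, then `H` is generically
`R`-equivalent to a ground model point on `U`. -/
structure IsPinned (R : BorelEqvRel) : Prop where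
  equivalence : Equivalence R.rel
  nonempty : Nonempty R.carrier
  measurableSet_rel : MeasurableSet[R.ms.prod R.ms] {p : R.carrier × R.carrier | R.rel p.1 p.2}
  exists_pin : ∀ (I I' : Type) [Countable I] [Countable I'] (H : Cohen I → R.carrier)
    (H' : Cohen I' → R.carrier), Measurable[baireMeasurableSpace _, R.ms] H →
    Measurable[baireMeasurableSpace _, R.ms] H' →
    ∀ (U : Set (Cohen I)) (U' : Set (Cohen I')), IsOpen U → U.Nonempty → IsOpen U' →
    U'.Nonempty →
    (∀ᶠ v in residual _ ⊓ 𝓟 (box U U'), R.rel (H (v ∘ Sum.inl)) (H' (v ∘ Sum.inr))) →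
    ∃ y, ∀ᶠ w in residual _ ⊓ 𝓟 U, R.rel (H w) y

section GammaJump

variable {Γ : Type} [Group Γ] {X : Type*} {r : X → X → Prop}

theorem Equivalence.gammaJump (hr : Equivalence r) : Equivalence (GammaJump Γ r) where
  refl x := ⟨1, fun a => by simpa using hr.refl (x a)⟩
  symm := fun ⟨γ, h⟩ => ⟨γ⁻¹, fun a => by simpa using hr.symm (h (γ * a))⟩
  trans := fun ⟨γ, h₁⟩ ⟨δ, h₂⟩ => ⟨δ * γ, fun a => by
    simpa [mul_assoc] using hr.trans (h₁ (δ⁻¹ * a)) (h₂ a)⟩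

theorem measurableSet_gammaJump [Countable Γ] [MeasurableSpace X]
    (hr : MeasurableSet {p : X × X | r p.1 p.2}) :
    MeasurableSet {p : (Γ → X) × (Γ → X) | GammaJump Γ r p.1 p.2} := by
  simp only [GammaJump, ofPred_exists, ofPred_forall]
  refine .iUnion fun γ => .iInter fun a => ?_
  have : Measurable fun p : (Γ → X) × (Γ → X) => (p.1 (γ⁻¹ * a), p.2 a) := by fun_prop
  exact this hr

variable [Countable Γ] {R : BorelEqvRel} {I I' : Type} [Countable I] [Countable I']

theorem IsPinned.exists_local_pin_gammaJump (hR : IsPinned R) {H : Cohen I → Γ → R.carrier}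
    {H' : Cohen I' → Γ → R.carrier} (hH : Measurable[baireMeasurableSpace _, (jumpB Γ R).ms] H)
    (hH' : Measurable[baireMeasurableSpace _, (jumpB Γ R).ms] H') {U : Set (Cohen I)}
    {U' : Set (Cohen I')} (hU' : IsOpen U') (hU'ne : U'.Nonempty)
    (hcross : ∀ᶠ v in residual _ ⊓ 𝓟 (box U U'),
      GammaJump Γ R.rel (H (v ∘ Sum.inl)) (H' (v ∘ Sum.inr)))
    {V : Set (Cohen I)} (hVU : V ⊆ U) (hV : IsOpen V) (hVne : V.Nonempty) :
    ∃ C ⊆ V, IsOpen C ∧ C.Nonempty ∧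
      ∃ y, ∀ᶠ w in residual _ ⊓ 𝓟 C, GammaJump Γ R.rel (H w) y := by
  let := R.ms
  have hHa : ∀ a, Measurable[baireMeasurableSpace _, R.ms] (H · a) :=
    fun a => (measurable_pi_apply a).comp hH
  have hH'a : ∀ a, Measurable[baireMeasurableSpace _, R.ms] (H' · a) :=
    fun a => (measurable_pi_apply a).comp hH'
  have := neBot_residual_inf_principal (isOpen_box hV hU') (nonempty_box hVne hU'ne)
  -- a single shift `γ` witnesses the jump on a nonmeagre part of `V × U'`
  obtain ⟨γ, hγ⟩ : ∃ γ : Γ, ∃ᶠ v in residual _ ⊓ 𝓟 (box V U'),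
      ∀ a, R.rel (H (v ∘ Sum.inl) (γ⁻¹ * a)) (H' (v ∘ Sum.inr) a) := by
    by_contra! h
    obtain ⟨v, ⟨γ, hγ⟩, hv⟩ := ((hcross.filter_mono (residual_inf_principal_mono
      (box_mono hVU subset_rfl))).and (eventually_countable_forall.mpr h)).exists
    obtain ⟨a, ha⟩ := hv γ
    exact ha (hγ a)
  have hγB : BaireMeasurableSet
      {v : Cohen (I ⊕ I') | ∀ a, R.rel (H (v ∘ Sum.inl) (γ⁻¹ * a)) (H' (v ∘ Sum.inr) a)} := by
    rw [ofPred_forall]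
    exact .iInter fun a =>
      (((hHa _).comp (measurable_comp_right_baire Sum.inl_injective)).prodMk
        ((hH'a a).comp (measurable_comp_right_baire Sum.inr_injective))) hR.measurableSet_rel
  obtain ⟨O, hOV, hO, hOne, hOγ⟩ := hγB.exists_eventually_mem (isOpen_box hV hU') hγ
  obtain ⟨C, C', hC, hCne, hC', hC'ne, hCO⟩ := hO.exists_box_subset hOne
  have hpin : ∀ a, ∃ y, ∀ᶠ w in residual _ ⊓ 𝓟 C, R.rel (H w (γ⁻¹ * a)) y := fun a =>
    hR.exists_pin I I' _ _ (hHa _) (hH'a a) C C' hC hCne hC' hC'ne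
      ((hOγ.filter_mono (residual_inf_principal_mono hCO)).mono fun v hv => hv a)
  choose y hy using hpin
  obtain ⟨w', hw'⟩ := hC'ne
  exact ⟨C, fun w hw => (hOV (hCO (show Sum.elim w w' ∈ box C C' from ⟨hw, hw'⟩))).1, hC, hCne,
    y, (eventually_countable_forall.mpr hy).mono fun w hw => ⟨γ, hw⟩⟩

theorem IsPinned.jumpB (hR : IsPinned R) : IsPinned (jumpB Γ R) := by
  let := R.ms
  have hrel :
      MeasurableSet {p : (Γ → R.carrier) × (Γ → R.carrier) | GammaJump Γ R.rel p.1 p.2} :=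
    measurableSet_gammaJump hR.measurableSet_rel
  refine ⟨hR.equivalence.gammaJump, ?_, hrel, ?_⟩
  · obtain ⟨x⟩ := hR.nonempty
    exact ⟨fun _ => x⟩
  · intro I I' _ _ H H' hH hH' U U' hU hUne hU' hU'ne hcross
    exact exists_pin_of_local_pins hR.equivalence.gammaJump
      (fun y => hH (measurableSet_setOf_rel_right hrel y)) hU hUne hU' hU'ne hcross
      fun V hVU hV hVne => hR.exists_local_pin_gammaJump hH hH' hU' hU'ne hcross hVU hV hVne

end GammaJump

section Sigma

variable {ι : Type*} {X : ι → Type*} [∀ i, MeasurableSpace (X i)]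

theorem measurableSet_sigma_iff {S : Set (Σ i, X i)} :
    MeasurableSet S ↔ ∀ i, MeasurableSet (Sigma.mk i ⁻¹' S) :=
  MeasurableSpace.measurableSet_iInf

theorem measurable_sigma_iff {β : Type*} [MeasurableSpace β] {g : (Σ i, X i) → β} :
    Measurable g ↔ ∀ i, Measurable fun x => g ⟨i, x⟩ :=
  ⟨fun h _ _ hS => measurableSet_sigma_iff.mp (h hS) _,
    fun h _ hS => measurableSet_sigma_iff.mpr fun i => h i hS⟩

theorem measurableSet_sigma_fst_eq (i : ι) : MeasurableSet {a : Σ i, X i | a.1 = i} :=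
  measurableSet_sigma_iff.mpr fun j => MeasurableSet.const (j = i)

theorem measurable_extend_sigmaMk (i : ι) (d : X i) :
    Measurable (extend (Sigma.mk i) id fun _ : Σ i, X i => d) := by
  refine measurable_sigma_iff.mpr fun j => ?_
  by_cases h : j = i
  · subst h
    simpa only [sigma_mk_injective.extend_apply] using measurable_id
  · have hx : ∀ x : X j, ¬∃ a, (⟨i, a⟩ : Σ i, X i) = ⟨j, x⟩ :=
      fun x ⟨a, ha⟩ => h (congrArg Sigma.fst ha).symm
    simpa only [extend_apply' _ _ _ (hx _)] using measurable_const

end Sigma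

section SumB

variable {ι : Type 1} {f : ι → BorelEqvRel}

theorem sumB_rel_mk_mk {i : ι} {x y : (f i).carrier} :
    (sumB f).rel ⟨i, x⟩ ⟨i, y⟩ ↔ (f i).rel x y := by
  refine ⟨fun ⟨j, x', y', h, ex, ey⟩ => ?_, fun h => ⟨i, x, y, h, rfl, rfl⟩⟩
  cases ex
  cases ey
  exact h

theorem fst_eq_of_sumB_rel {a b : (sumB f).carrier} (h : (sumB f).rel a b) : a.1 = b.1 := by
  obtain ⟨i, x, y, -, rfl, rfl⟩ := h
  rfl

theorem Equivalence.sumB (h : ∀ i, Equivalence (f i).rel) : Equivalence (sumB f).rel where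
  refl a := sumB_rel_mk_mk.mpr ((h a.1).refl a.2)
  symm := fun ⟨i, x, y, hxy, ex, ey⟩ => ⟨i, y, x, (h i).symm hxy, ey, ex⟩
  trans := by
    rintro _ _ _ ⟨i, x, y, hxy, rfl, rfl⟩ ⟨j, y', z, hyz, e, rfl⟩
    cases e
    exact ⟨i, x, z, (h i).trans hxy hyz, rfl, rfl⟩

/-- `d` is the junk value off the `i`-th summand. -/
noncomputable abbrev sumProj (i : ι) (d : (f i).carrier) :
    (Σ j, (f j).carrier) → (f i).carrier :=
  extend (Sigma.mk i) id fun _ => d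

theorem sumProj_mk {i : ι} (d x : (f i).carrier) : sumProj i d ⟨i, x⟩ = x :=
  sigma_mk_injective.extend_apply _ _ _

theorem sumB_rel_iff_of_fst_eq {i : ι} (d : (f i).carrier) {a b : (sumB f).carrier}
    (ha : a.1 = i) (hb : b.1 = i) :
    (sumB f).rel a b ↔ (f i).rel (sumProj i d a) (sumProj i d b) := by
  obtain ⟨j, x⟩ := a
  obtain ⟨k, y⟩ := b
  dsimp only at ha hb
  subst ha hb
  rw [sumProj_mk, sumProj_mk, sumB_rel_mk_mk]

theorem measurableSet_sumB_rel [Countable ι] (hne : ∀ i, Nonempty (f i).carrier)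
    (h : ∀ i, MeasurableSet[(f i).ms.prod (f i).ms] {p | (f i).rel p.1 p.2}) :
    MeasurableSet[(sumB f).ms.prod (sumB f).ms] {p | (sumB f).rel p.1 p.2} := by
  let := fun i => (f i).ms
  let d i := (hne i).some
  have hgraph : {p : (sumB f).carrier × (sumB f).carrier | (sumB f).rel p.1 p.2} =
      ⋃ i, {p | p.1.1 = i ∧ p.2.1 = i ∧
        (f i).rel (sumProj i (d i) p.1) (sumProj i (d i) p.2)} := by
    ext ⟨a, b⟩
    simp only [mem_ofPred_eq, mem_iUnion]
    refine ⟨fun hab => ⟨a.1, rfl, (fst_eq_of_sumB_rel hab).symm, ?_⟩, fun ⟨i, ha, hb, hab⟩ => ?_⟩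
    · exact (sumB_rel_iff_of_fst_eq (d a.1) rfl (fst_eq_of_sumB_rel hab).symm).mp hab
    · exact (sumB_rel_iff_of_fst_eq (d i) ha hb).mpr hab
  rw [hgraph]
  refine .iUnion fun i => (measurable_fst (measurableSet_sigma_fst_eq i)).inter
    ((measurable_snd (measurableSet_sigma_fst_eq i)).inter ?_)
  have hproj := measurable_extend_sigmaMk (X := fun j => (f j).carrier) i (d i)
  exact ((hproj.comp measurable_fst).prodMk (hproj.comp measurable_snd)) (h i)

theorem isPinned_sumB [Countable ι] [Nonempty ι] (h : ∀ i, IsPinned (f i)) :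
    IsPinned (sumB f) := by
  refine ⟨.sumB fun i => (h i).equivalence, ⟨⟨Classical.arbitrary ι, (h _).nonempty.some⟩⟩,
    measurableSet_sumB_rel (fun i => (h i).nonempty) fun i => (h i).measurableSet_rel, ?_⟩
  intro I I' _ _ H H' hH hH' U U' hU hUne hU' hU'ne hcross
  let := fun i => (f i).ms
  obtain ⟨i, hi, hi'⟩ := exists_eventually_eq_of_countable (H := fun w => (H w).1)
    (H' := fun w => (H' w).1) (fun c => hH (measurableSet_sigma_fst_eq c))
    (fun c => hH' (measurableSet_sigma_fst_eq c)) hU hUne hU' hU'ne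
    (hcross.mono fun _ => fst_eq_of_sumB_rel)
  let d := (h i).nonempty.some
  have hproj : Measurable[(sumB f).ms, (f i).ms] (sumProj i d) :=
    measurable_extend_sigmaMk (X := fun j => (f j).carrier) i d
  have hcross_i : ∀ᶠ v in residual _ ⊓ 𝓟 (box U U'),
      (f i).rel (sumProj i d (H (v ∘ Sum.inl))) (sumProj i d (H' (v ∘ Sum.inr))) :=
    (hcross.and ((eventually_box_left hi).and (eventually_box_right hi'))).mono
      fun _ ⟨hv, h₁, h₂⟩ => (sumB_rel_iff_of_fst_eq d h₁ h₂).mp hv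
  obtain ⟨y, hy⟩ := (h i).exists_pin I I' _ _ (hproj.comp hH) (hproj.comp hH') U U'
    hU hUne hU' hU'ne hcross_i
  refine ⟨⟨i, y⟩, (hi.and hy).mono fun w ⟨h₁, h₂⟩ => (sumB_rel_iff_of_fst_eq d h₁ rfl).mpr ?_⟩
  rwa [sumProj_mk]

end SumB

theorem isPinned_deltaTwo : IsPinned deltaTwo := by
  unfold deltaTwo
  let : MeasurableSpace (ULift Bool) := ⊤
  have : MeasurableSingletonClass (ULift Bool) := ⟨fun _ => trivial⟩
  refine ⟨eq_equivalence, ⟨⟨false⟩⟩, measurableSet_diagonal, ?_⟩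
  intro I I' _ _ H H' hH hH' U U' hU hUne hU' hU'ne hcross
  obtain ⟨c, hc, -⟩ := exists_eventually_eq_of_countable (fun c => hH (measurableSet_singleton c))
    (fun c => hH' (measurableSet_singleton c)) hU hUne hU' hU'ne hcross
  exact ⟨c, hc⟩

section IterJump

variable {Γ : Type} [Group Γ] {E : BorelEqvRel}

theorem iterJump_zero : iterJump Γ E 0 = E :=
  Ordinal.limitRecOn_zero _ _ _

theorem iterJump_add_one (o : Ordinal) :
    iterJump Γ E (o + 1) = jumpB Γ (iterJump Γ E o) :=
  Ordinal.limitRecOn_add_one _ _ _ _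

theorem iterJump_limit {o : Ordinal} (h : Order.IsSuccLimit o) :
    iterJump Γ E o = jumpB Γ (sumB fun i : {β : Ordinal // β < o} => iterJump Γ E i.1) :=
  Ordinal.limitRecOn_limit _ _ _ _ h

theorem isPinned_iterJump [Countable Γ] (hE : IsPinned E) {α : Ordinal}
    (hα : α.card ≤ Cardinal.aleph0) : IsPinned (iterJump Γ E α) := by
  induction α using WellFoundedLT.induction with | ind β ih => ?_
  have ih' : ∀ γ < β, IsPinned (iterJump Γ E γ) := fun γ hγ =>
    ih γ hγ ((Ordinal.card_le_card hγ.le).trans hα)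
  rcases Ordinal.zero_or_succ_or_isSuccLimit β with rfl | ⟨γ, rfl⟩ | hβ
  · rwa [iterJump_zero]
  · rw [Order.succ_eq_add_one, iterJump_add_one]
    exact (ih' γ (Order.lt_succ γ)).jumpB
  · rw [iterJump_limit hβ]
    have : Countable {γ : Ordinal // γ < β} := by
      have hmk : Cardinal.mk {γ : Ordinal // γ < β} = Cardinal.lift β.card :=
        Cardinal.mk_Iio_ordinal β
      rw [← Cardinal.mk_le_aleph0_iff, hmk]
      exact Cardinal.lift_le_aleph0.mpr hα
    have : Nonempty {γ : Ordinal // γ < β} := ⟨⟨0, hβ.bot_lt⟩⟩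
    exact (isPinned_sumB fun i : {γ : Ordinal // γ < β} => ih' i.1 i.2).jumpB

end IterJump

theorem FStower_two : FStower 2 = fsJumpB (fsJumpB ⟨ULift ℕ, ⊤, Eq⟩) := by
  rw [FStower, ← one_add_one_eq_two, Ordinal.limitRecOn_add_one, ← zero_add (1 : Ordinal),
    Ordinal.limitRecOn_add_one, Ordinal.limitRecOn_zero]

theorem fsJumpB_rel_iff (u v : ℕ → ULift ℕ) :
    (fsJumpB ⟨ULift ℕ, ⊤, Eq⟩).rel u v ↔ range u = range v := by
  have h : ∀ w : ℕ → ULift ℕ, range (fun n => {z | w n = z}) = (fun a => {a}) '' range w :=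
    fun w => by
      rw [← range_comp]
      congr 1
      funext n
      ext z
      exact eq_comm
  change range _ = range _ ↔ _
  rw [h, h]
  exact image_eq_image singleton_injective

theorem fsJumpB_fsJumpB_rel_iff (x y : ℕ → ℕ → ULift ℕ) :
    (fsJumpB (fsJumpB ⟨ULift ℕ, ⊤, Eq⟩)).rel x y ↔
      range (fun n => range (x n)) = range (fun n => range (y n)) := by
  let cls : Set (ULift.{1} ℕ) → Set (ℕ → ULift.{1} ℕ) := fun S => {z | S = range z}
  have hcls : InjOn cls (range (range : (ℕ → ULift.{1} ℕ) → Set (ULift.{1} ℕ))) := by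
    rintro _ ⟨u, rfl⟩ _ ⟨v, rfl⟩ huv
    exact (show u ∈ cls (range v) from huv ▸ rfl).symm
  have hrange : ∀ x : ℕ → ℕ → ULift ℕ,
      range (fun n => {z | (fsJumpB ⟨ULift ℕ, ⊤, Eq⟩).rel (x n) z}) =
        cls '' range (fun n => range (x n)) := fun x => by
    rw [← range_comp]
    congr 1
    funext n
    ext z
    exact fsJumpB_rel_iff _ _
  change range _ = range _ ↔ _
  rw [hrange, hrange]
  exact hcls.image_eq_image_iff (range_subset_iff.mpr fun n => mem_range_self (x n))
    (range_subset_iff.mpr fun n => mem_range_self (y n))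

theorem measurable_id_baire_pi {I A : Type*} [TopologicalSpace A] [DiscreteTopology A]
    (m : MeasurableSpace A) :
    Measurable[baireMeasurableSpace (I → A), MeasurableSpace.pi] (id : (I → A) → I → A) :=
  (@measurable_pi_iff _ _ _ (baireMeasurableSpace (I → A)) _ id).mpr fun i S _ =>
    ((isOpen_discrete S).preimage (continuous_apply i)).baireMeasurableSet

theorem eventually_residual_fsJumpB_fsJumpB_rel :
    ∀ᶠ v in residual (Cohen (ℕ ⊕ ℕ)),
      (fsJumpB (fsJumpB ⟨ULift ℕ, ⊤, Eq⟩)).rel (v ∘ Sum.inl) (v ∘ Sum.inr) := by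
  have h₁ : ∀ n, ∀ᶠ v in residual (Cohen (ℕ ⊕ ℕ)), ∃ k ∈ range Sum.inr, v k = v (Sum.inl n) :=
    fun n => eventually_residual_exists_apply_eq_apply
      (infinite_range_of_injective Sum.inr_injective) _
  have h₂ : ∀ n, ∀ᶠ v in residual (Cohen (ℕ ⊕ ℕ)), ∃ k ∈ range Sum.inl, v k = v (Sum.inr n) :=
    fun n => eventually_residual_exists_apply_eq_apply
      (infinite_range_of_injective Sum.inl_injective) _
  filter_upwards [eventually_countable_forall.mpr h₁, eventually_countable_forall.mpr h₂]
    with v hv₁ hv₂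
  refine (fsJumpB_fsJumpB_rel_iff _ _).mpr (Subset.antisymm ?_ ?_)
  · rintro _ ⟨n, rfl⟩
    obtain ⟨_, ⟨m, rfl⟩, hm⟩ := hv₁ n
    exact ⟨m, congrArg (fun c : ℕ → ULift ℕ => range c) hm⟩
  · rintro _ ⟨n, rfl⟩
    obtain ⟨_, ⟨m, rfl⟩, hm⟩ := hv₂ n
    exact ⟨m, congrArg (fun c : ℕ → ULift ℕ => range c) hm⟩

theorem exists_range_notMem_range (x : ℕ → ℕ → ULift ℕ) :
    ∃ c : ℕ → ULift ℕ, range c ∉ range (fun n => range (x n)) := by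
  classical
  by_contra! h
  -- otherwise `n ↦ {k | k + 1 ∈ range (x n)}` would be onto `Set ℕ`
  refine cantor_surjective (fun n => {k | ULift.up (k + 1) ∈ range (x n)}) fun B => ?_
  obtain ⟨n, hn⟩ := h fun k => if k ∈ B then ULift.up (k + 1) else ULift.up 0
  refine ⟨n, ext fun k => ?_⟩
  simp only [mem_ofPred_eq, hn, mem_range]
  refine ⟨fun ⟨m, hm⟩ => ?_, fun hk => ⟨k, if_pos hk⟩⟩
  split_ifs at hm with hmB
  · obtain rfl : m = k := by simpa using hm
    exact hmB
  · simp at hm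

theorem not_redB_FStower_two_of_isPinned {J : BorelEqvRel} (hJ : IsPinned J) :
    ¬ RedB (FStower 2) J := by
  rw [FStower_two]
  rintro ⟨f, hf, hred⟩
  have hfB : Measurable[baireMeasurableSpace (Cohen ℕ), J.ms] f :=
    hf.comp (measurable_id_baire_pi _)
  obtain ⟨y, hy⟩ := hJ.exists_pin ℕ ℕ f f hfB hfB univ univ isOpen_univ univ_nonempty isOpen_univ
    univ_nonempty <| (eventually_residual_fsJumpB_fsJumpB_rel.filter_mono inf_le_left).mono
      fun v hv => (hred _ _).mp hv
  have := neBot_residual_inf_principal (X := Cohen ℕ) isOpen_univ univ_nonempty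
  obtain ⟨w₀, hw₀⟩ := hy.exists
  obtain ⟨c, hc⟩ := exists_range_notMem_range w₀
  obtain ⟨w, hw, n, -, hn⟩ := (hy.and ((eventually_residual_exists_apply_eq (A := Col)
    infinite_univ c).filter_mono inf_le_left)).exists
  have hww₀ := (fsJumpB_fsJumpB_rel_iff w w₀).mp
    ((hred _ _).mpr (hJ.equivalence.trans hw (hJ.equivalence.symm hw₀)))
  exact hc (hww₀ ▸ ⟨n, congrArg (fun c : ℕ → ULift ℕ => range c) hn⟩)

/-- For every countable group `Γ` and every countable ordinal `α`,
`F_2` is not Borel reducible to the iterated Γ-jump `J^α_Γ` of `Δ(2)`. -/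
theorem FStower_two_not_borelReducible_iterJump
    (Γ : Type) [Group Γ] [Countable Γ] (α : Ordinal)
    (hcount : α.card ≤ Cardinal.aleph0) :
    ¬ RedB (FStower 2) (iterJump Γ deltaTwo α) :=
  not_redB_FStower_two_of_isPinned (isPinned_iterJump isPinned_deltaTwo hcount)
end

section
/- Let Γ be a countable group and let E be a Borel equivalence relation on a standard Borel space X with at least two equivalence classes. If E^{[Γ]} is Borel reducible to E, then there exists a Borel diagonalizer for (E^{[Γ]})^{[Γ]}. -/
/-- A Borel diagonalizer for `E^{[Γ]}` (with `E` on `X`): a Borel `E^{[Γ]}`-invariant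
map `f : X^Γ → X` such that `f(x)` is `E`-inequivalent to every coordinate `x(γ)`. -/
def IsBorelDiagonalizer {X : Type*} [MeasurableSpace X] (Γ : Type*) [Group Γ]
    (E : X → X → Prop) (f : (Γ → X) → X) : Prop :=
  Measurable f ∧ (∀ x y, GammaJump Γ E x y → E (f x) (f y)) ∧
    ∀ (x : Γ → X) (γ : Γ), ¬ E (f x) (x γ)

namespace Statement12Aux

variable {Γ : Type*} [Group Γ] {X : Type*}

/-- A row `R` is "good" if its `f`-value is `E`-inequivalent to every entry of `R`
and to the two markers `a`, `b`. -/
def PGood (E : X → X → Prop) (f : (Γ → X) → X) (a b : X) (R : Γ → X) : Prop :=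
  (∀ β, ¬ E (f R) (R β)) ∧ ¬ E (f R) a ∧ ¬ E (f R) b

open Classical in
/-- The candidate sequence: at position `α`, use `f (x α)` if the row `x α` is good,
otherwise use the marker `m (x α)`. -/
noncomputable def mkSeq (E : X → X → Prop) (f : (Γ → X) → X) (a b : X)
    (m : (Γ → X) → X) (x : Γ → Γ → X) : Γ → X :=
  fun α => if PGood E f a b (x α) then f (x α) else m (x α)

/-- The candidate for marker `m` fails on `x`: some row is jump-equivalent to it. -/
def BadFor (E : X → X → Prop) (f : (Γ → X) → X) (a b : X)
    (m : (Γ → X) → X) (x : Γ → Γ → X) : Prop :=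
  ∃ δ, E (f (mkSeq E f a b m x)) (f (x δ))

theorem mkSeq_pos {E : X → X → Prop} {f : (Γ → X) → X} {a b : X}
    {m : (Γ → X) → X} {x : Γ → Γ → X} {α : Γ} (h : PGood E f a b (x α)) :
    mkSeq E f a b m x α = f (x α) := by
  simp [mkSeq, h]

theorem mkSeq_neg {E : X → X → Prop} {f : (Γ → X) → X} {a b : X}
    {m : (Γ → X) → X} {x : Γ → Γ → X} {α : Γ} (h : ¬ PGood E f a b (x α)) :
    mkSeq E f a b m x α = m (x α) := by
  simp [mkSeq, h]

theorem gammaJump_symm {E : X → X → Prop} (hE : Equivalence E) {u v : Γ → X}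
    (h : GammaJump Γ E u v) : GammaJump Γ E v u := by
  obtain ⟨γ, h⟩ := h
  refine ⟨γ⁻¹, fun α => ?_⟩
  have h2 := h (γ * α)
  rw [inv_mul_cancel_left] at h2
  rw [inv_inv]
  exact hE.symm h2

theorem pgood_mono {E : X → X → Prop} {f : (Γ → X) → X} {a b : X}
    (hE : Equivalence E)
    (hfred : ∀ u v : Γ → X, GammaJump Γ E u v ↔ E (f u) (f v))
    {R R' : Γ → X} (h : GammaJump Γ E R R') (hP : PGood E f a b R) :
    PGood E f a b R' := by
  have hEf : E (f R) (f R') := (hfred R R').mp h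
  obtain ⟨τ, hτ⟩ := h
  refine ⟨fun β hb => ?_, fun ha' => hP.2.1 (hE.trans hEf ha'),
    fun hb' => hP.2.2 (hE.trans hEf hb')⟩
  exact hP.1 (τ⁻¹ * β) (hE.trans (hE.trans hEf hb) (hE.symm (hτ β)))

theorem mk_inv {E : X → X → Prop} {f : (Γ → X) → X} {a b : X}
    (hE : Equivalence E)
    (hfred : ∀ u v : Γ → X, GammaJump Γ E u v ↔ E (f u) (f v))
    {m : (Γ → X) → X} (hm : ∀ R R' : Γ → X, E (f R) (f R') → m R = m R')
    {x y : Γ → Γ → X} (hxy : GammaJump Γ (GammaJump Γ E) x y) :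
    GammaJump Γ E (mkSeq E f a b m x) (mkSeq E f a b m y) := by
  obtain ⟨γ, hγ⟩ := hxy
  refine ⟨γ, fun α => ?_⟩
  have hR := hγ α
  have hEf := (hfred _ _).mp hR
  by_cases hP : PGood E f a b (x (γ⁻¹ * α))
  · rw [mkSeq_pos hP, mkSeq_pos (pgood_mono hE hfred hR hP)]
    exact hEf
  · have hP' : ¬ PGood E f a b (y α) := fun h' =>
      hP (pgood_mono hE hfred (gammaJump_symm hE hR) h')
    rw [mkSeq_neg hP, mkSeq_neg hP', hm _ _ hEf]
    exact hE.refl _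

theorem bad_inv {E : X → X → Prop} {f : (Γ → X) → X} {a b : X}
    (hE : Equivalence E)
    (hfred : ∀ u v : Γ → X, GammaJump Γ E u v ↔ E (f u) (f v))
    {m : (Γ → X) → X} (hm : ∀ R R' : Γ → X, E (f R) (f R') → m R = m R')
    {x y : Γ → Γ → X} (hxy : GammaJump Γ (GammaJump Γ E) x y) :
    BadFor E f a b m x ↔ BadFor E f a b m y := by
  obtain ⟨γ, hγ⟩ := hxy
  have hC : E (f (mkSeq E f a b m x)) (f (mkSeq E f a b m y)) :=
    (hfred _ _).mp (mk_inv hE hfred hm ⟨γ, hγ⟩)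
  constructor
  · rintro ⟨δ, hδ⟩
    have h2 := (hfred _ _).mp (hγ (γ * δ))
    rw [inv_mul_cancel_left] at h2
    exact ⟨γ * δ, hE.trans (hE.trans (hE.symm hC) hδ) h2⟩
  · rintro ⟨δ, hδ⟩
    have h2 := (hfred _ _).mp (hγ δ)
    exact ⟨γ⁻¹ * δ, hE.trans (hE.trans hC hδ) (hE.symm h2)⟩

/-- If some row is jump-equivalent to the candidate, then that row is not good and
its `f`-value is equivalent to `a` or to `b`. -/
theorem mk_bad_row {E : X → X → Prop} {f : (Γ → X) → X} {a b : X}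
    (hE : Equivalence E)
    (hfred : ∀ u v : Γ → X, GammaJump Γ E u v ↔ E (f u) (f v))
    {m : (Γ → X) → X} (hmab : ∀ R : Γ → X, m R = a ∨ m R = b)
    {x : Γ → Γ → X} {δ : Γ}
    (h : GammaJump Γ E (mkSeq E f a b m x) (x δ)) :
    ¬ PGood E f a b (x δ) ∧ (E (f (x δ)) a ∨ E (f (x δ)) b) := by
  obtain ⟨γ, hγ⟩ := h
  have h1 : ¬ PGood E f a b (x δ) := by
    intro hP
    have h2 := hγ (γ * δ)
    rw [inv_mul_cancel_left, mkSeq_pos hP] at h2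
    exact hP.1 _ h2
  refine ⟨h1, ?_⟩
  by_contra hcon
  push_neg at hcon
  have h3 : ¬ ∀ β, ¬ E (f (x δ)) (x δ β) := fun hall => h1 ⟨hall, hcon.1, hcon.2⟩
  push_neg at h3
  obtain ⟨β₀, hβ₀⟩ := h3
  have h4 := hγ β₀
  by_cases hPS : PGood E f a b (x (γ⁻¹ * β₀))
  · rw [mkSeq_pos hPS] at h4
    have h5 : E (f (x δ)) (f (x (γ⁻¹ * β₀))) := hE.trans hβ₀ (hE.symm h4)
    exact h1 (pgood_mono hE hfred (gammaJump_symm hE ((hfred _ _).mpr h5)) hPS)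
  · rw [mkSeq_neg hPS] at h4
    have h5 : E (f (x δ)) (m (x (γ⁻¹ * β₀))) := hE.trans hβ₀ (hE.symm h4)
    rcases hmab (x (γ⁻¹ * β₀)) with hma | hmb
    · exact hcon.1 (hma ▸ h5)
    · exact hcon.2 (hmb ▸ h5)

theorem mk_contra_ab {E : X → X → Prop} {f : (Γ → X) → X} {a b : X}
    (hE : Equivalence E) (hab : ¬ E a b)
    {mi mj : (Γ → X) → X} {x : Γ → Γ → X} {δ : Γ}
    (hP : ¬ PGood E f a b (x δ)) (hja : mj (x δ) = a) (hib : ∀ S : Γ → X, mi S = b)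
    (h : GammaJump Γ E (mkSeq E f a b mi x) (mkSeq E f a b mj x)) : False := by
  obtain ⟨τ, hτ⟩ := h
  have h1 := hτ δ
  rw [mkSeq_neg hP, hja] at h1
  by_cases hPS : PGood E f a b (x (τ⁻¹ * δ))
  · rw [mkSeq_pos hPS] at h1
    exact hPS.2.1 h1
  · rw [mkSeq_neg hPS, hib] at h1
    exact hab (hE.symm h1)

theorem mk_contra_ba {E : X → X → Prop} {f : (Γ → X) → X} {a b : X}
    (hE : Equivalence E) (hab : ¬ E a b)
    {mi mj : (Γ → X) → X} {x : Γ → Γ → X} {δ : Γ}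
    (hP : ¬ PGood E f a b (x δ)) (hjb : mj (x δ) = b) (hia : ∀ S : Γ → X, mi S = a)
    (h : GammaJump Γ E (mkSeq E f a b mi x) (mkSeq E f a b mj x)) : False := by
  obtain ⟨τ, hτ⟩ := h
  have h1 := hτ δ
  rw [mkSeq_neg hP, hjb] at h1
  by_cases hPS : PGood E f a b (x (τ⁻¹ * δ))
  · rw [mkSeq_pos hPS] at h1
    exact hPS.2.2 h1
  · rw [mkSeq_neg hPS, hia] at h1
    exact hab h1

end Statement12Aux

open Statement12Aux in
/-- If `Γ` is a countable group and `E` is a Borel equivalence relation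
with at least two classes such that `E^{[Γ]} ≤_B E`, then there is a Borel
diagonalizer for `(E^{[Γ]})^{[Γ]}`. -/
theorem exists_borelDiagonalizer_of_jump_reducible
    {Γ : Type*} [Group Γ] [Countable Γ]
    {X : Type*} [MeasurableSpace X] [StandardBorelSpace X]
    (E : X → X → Prop) (hE : Equivalence E)
    (hEBorel : MeasurableSet {p : X × X | E p.1 p.2})
    (htwo : ∃ a b : X, ¬ E a b)
    (hred : BorelReducible (GammaJump Γ E) E) :
    ∃ f : (Γ → Γ → X) → (Γ → X), IsBorelDiagonalizer Γ (GammaJump Γ E) f := by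
  classical
  obtain ⟨a, b, hab⟩ := htwo
  obtain ⟨f, hf, hfred⟩ := hred
  set m1 : (Γ → X) → X := fun _ => b with hm1def
  set m2 : (Γ → X) → X := fun _ => a with hm2def
  set m3 : (Γ → X) → X := fun R => if E (f R) b then a else b with hm3def
  have hm1 : ∀ R R' : Γ → X, E (f R) (f R') → m1 R = m1 R' := fun _ _ _ => rfl
  have hm2 : ∀ R R' : Γ → X, E (f R) (f R') → m2 R = m2 R' := fun _ _ _ => rfl
  have hm3 : ∀ R R' : Γ → X, E (f R) (f R') → m3 R = m3 R' := by
    intro R R' h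
    by_cases hb' : E (f R) b
    · have h2 : E (f R') b := hE.trans (hE.symm h) hb'
      simp only [hm3def, if_pos hb', if_pos h2]
    · have h2 : ¬ E (f R') b := fun hh => hb' (hE.trans h hh)
      simp only [hm3def, if_neg hb', if_neg h2]
  have hmab1 : ∀ R : Γ → X, m1 R = a ∨ m1 R = b := fun _ => Or.inr rfl
  have hmab2 : ∀ R : Γ → X, m2 R = a ∨ m2 R = b := fun _ => Or.inl rfl
  have m3a : ∀ R : Γ → X, E (f R) b → m3 R = a := by
    intro R h; simp only [hm3def, if_pos h]
  have m3b : ∀ R : Γ → X, ¬ E (f R) b → m3 R = b := by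
    intro R h; simp only [hm3def, if_neg h]
  have hmab3 : ∀ R : Γ → X, m3 R = a ∨ m3 R = b := by
    intro R
    by_cases hb' : E (f R) b
    · exact Or.inl (m3a R hb')
    · exact Or.inr (m3b R hb')
  -- the key combinatorial fact: the three candidates cannot all fail
  have main : ∀ x : Γ → Γ → X,
      BadFor E f a b m1 x → BadFor E f a b m2 x → BadFor E f a b m3 x → False := by
    rintro x ⟨δ₁, h₁⟩ ⟨δ₂, h₂⟩ ⟨δ₃, h₃⟩
    obtain ⟨hP₁, hc₁⟩ := mk_bad_row hE hfred hmab1 ((hfred _ _).mpr h₁)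
    obtain ⟨hP₂, hc₂⟩ := mk_bad_row hE hfred hmab2 ((hfred _ _).mpr h₂)
    obtain ⟨hP₃, hc₃⟩ := mk_bad_row hE hfred hmab3 ((hfred _ _).mpr h₃)
    have pair : ∀ (mi mj : (Γ → X) → X) (c : X),
        E (f (mkSeq E f a b mi x)) c → E (f (mkSeq E f a b mj x)) c →
        GammaJump Γ E (mkSeq E f a b mi x) (mkSeq E f a b mj x) :=
      fun mi mj c hi hj => (hfred _ _).mpr (hE.trans hi (hE.symm hj))
    rcases hc₁ with ha1 | hb1
    · rcases hc₂ with ha2 | hb2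
      · -- both rows have f-class [a]: candidates 1 and 2 are equivalent
        exact mk_contra_ab hE hab hP₂ rfl (fun _ => rfl)
          (pair m1 m2 a (hE.trans h₁ ha1) (hE.trans h₂ ha2))
      · -- row 1 in class a, row 2 in class b: case on row 3
        rcases hc₃ with ha3 | hb3
        · exact mk_contra_ab hE hab hP₂ (m3a _ hb2) (fun _ => rfl)
            (pair m1 m3 a (hE.trans h₁ ha1) (hE.trans h₃ ha3))
        · have hnb₁ : ¬ E (f (x δ₁)) b := fun hh => hab (hE.trans (hE.symm ha1) hh)
          exact mk_contra_ba hE hab hP₁ (m3b _ hnb₁) (fun _ => rfl)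
            (pair m2 m3 b (hE.trans h₂ hb2) (hE.trans h₃ hb3))
    · rcases hc₂ with ha2 | hb2
      · rcases hc₃ with ha3 | hb3
        · have hnb₂ : ¬ E (f (x δ₂)) b := fun hh => hab (hE.trans (hE.symm ha2) hh)
          exact mk_contra_ba hE hab hP₂ (m3b _ hnb₂) (fun _ => rfl)
            (pair m2 m3 a (hE.trans h₂ ha2) (hE.trans h₃ ha3))
        · exact mk_contra_ab hE hab hP₁ (m3a _ hb1) (fun _ => rfl)
            (pair m1 m3 b (hE.trans h₁ hb1) (hE.trans h₃ hb3))
      · exact mk_contra_ab hE hab hP₂ rfl (fun _ => rfl)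
          (pair m1 m2 b (hE.trans h₁ hb1) (hE.trans h₂ hb2))
  -- measurability facts
  have hPset : MeasurableSet {R : Γ → X | PGood E f a b R} := by
    have hA : ∀ β : Γ, MeasurableSet {R : Γ → X | E (f R) (R β)} := fun β =>
      (hf.prodMk (measurable_pi_apply β)) hEBorel
    have hB : MeasurableSet {R : Γ → X | E (f R) a} :=
      (hf.prodMk measurable_const) hEBorel
    have hC : MeasurableSet {R : Γ → X | E (f R) b} :=
      (hf.prodMk measurable_const) hEBorel
    have heq : {R : Γ → X | PGood E f a b R} =
        (⋂ β : Γ, {R : Γ → X | E (f R) (R β)}ᶜ) ∩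
          ({R : Γ → X | E (f R) a}ᶜ ∩ {R : Γ → X | E (f R) b}ᶜ) := by
      ext R
      simp [PGood, Set.mem_iInter]
    rw [heq]
    exact (MeasurableSet.iInter fun β => (hA β).compl).inter
      (hB.compl.inter hC.compl)
  have hm3meas : Measurable m3 := by
    rw [hm3def]
    exact Measurable.ite ((hf.prodMk measurable_const) hEBorel)
      measurable_const measurable_const
  have hmk : ∀ m : (Γ → X) → X, Measurable m → Measurable (mkSeq E f a b m) := by
    intro m hm
    apply measurable_pi_lambda
    intro α
    exact (Measurable.ite hPset hf hm).comp (measurable_pi_apply α)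
  have hBadMeas : ∀ m : (Γ → X) → X, Measurable m →
      MeasurableSet {x : Γ → Γ → X | BadFor E f a b m x} := by
    intro m hm
    have heq : {x : Γ → Γ → X | BadFor E f a b m x} =
        ⋃ δ : Γ, {x : Γ → Γ → X | E (f (mkSeq E f a b m x)) (f (x δ))} := by
      ext x; simp [BadFor]
    rw [heq]
    exact MeasurableSet.iUnion fun δ =>
      ((hf.comp (hmk m hm)).prodMk (hf.comp (measurable_pi_apply δ))) hEBorel
  refine ⟨fun x => if BadFor E f a b m1 x then
      (if BadFor E f a b m2 x then mkSeq E f a b m3 x else mkSeq E f a b m2 x)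
    else mkSeq E f a b m1 x, ?_, ?_, ?_⟩
  · exact Measurable.ite (hBadMeas m1 measurable_const)
      (Measurable.ite (hBadMeas m2 measurable_const) (hmk m3 hm3meas)
        (hmk m2 measurable_const))
      (hmk m1 measurable_const)
  · intro x y hxy
    by_cases hb1 : BadFor E f a b m1 x
    · have hb1' : BadFor E f a b m1 y := (bad_inv hE hfred hm1 hxy).mp hb1
      by_cases hb2 : BadFor E f a b m2 x
      · have hb2' : BadFor E f a b m2 y := (bad_inv hE hfred hm2 hxy).mp hb2
        simp only [if_pos hb1, if_pos hb1', if_pos hb2, if_pos hb2']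
        exact mk_inv hE hfred hm3 hxy
      · have hb2' : ¬ BadFor E f a b m2 y := fun h =>
          hb2 ((bad_inv hE hfred hm2 hxy).mpr h)
        simp only [if_pos hb1, if_pos hb1', if_neg hb2, if_neg hb2']
        exact mk_inv hE hfred hm2 hxy
    · have hb1' : ¬ BadFor E f a b m1 y := fun h =>
        hb1 ((bad_inv hE hfred hm1 hxy).mpr h)
      simp only [if_neg hb1, if_neg hb1']
      exact mk_inv hE hfred hm1 hxy
  · intro x δ h
    by_cases hb1 : BadFor E f a b m1 x
    · by_cases hb2 : BadFor E f a b m2 x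
      · simp only [if_pos hb1, if_pos hb2] at h
        exact main x hb1 hb2 ⟨δ, (hfred _ _).mp h⟩
      · simp only [if_pos hb1, if_neg hb2] at h
        exact hb2 ⟨δ, (hfred _ _).mp h⟩
    · simp only [if_neg hb1] at h
      exact hb1 ⟨δ, (hfred _ _).mp h⟩
end

section
/- Let Γ be a group with no infinite strictly decreasing sequence of subgroups. Then every descending sequence C_0 ⊇ C_1 ⊇ C_2 ⊇ ⋯ of nonempty subsets of Γ, each of which is a left coset of some subgroup of Γ, has nonempty intersection: ⋂_n C_n ≠ ∅. -/
/-- If a coset `a*K` is contained in a coset `b*L`, then `K ≤ L`. -/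
lemma coset_subset_le {Γ : Type*} [Group Γ] (a b : Γ) (K L : Subgroup Γ)
    (h : (fun h => a * h) '' (K : Set Γ) ⊆ (fun h => b * h) '' (L : Set Γ)) : K ≤ L := by
  obtain ⟨l₀, hl₀, hb⟩ := h ⟨1, K.one_mem, rfl⟩
  intro k hk
  obtain ⟨l, hl, hbl⟩ := h ⟨k, hk, rfl⟩
  simp only at hb hbl
  have : k = (b * l₀)⁻¹ * (b * l) := by
    rw [hb, hbl]; group
  rw [this]
  have : (b * l₀)⁻¹ * (b * l) = l₀⁻¹ * l := by group
  rw [this]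
  exact L.mul_mem (L.inv_mem hl₀) hl

/-- A coset of `K` contained in another coset of `K` equals it. -/
lemma coset_subset_eq {Γ : Type*} [Group Γ] (a b : Γ) (K : Subgroup Γ)
    (h : (fun h => a * h) '' (K : Set Γ) ⊆ (fun h => b * h) '' (K : Set Γ)) :
    (fun h => a * h) '' (K : Set Γ) = (fun h => b * h) '' (K : Set Γ) := by
  apply Set.Subset.antisymm h
  obtain ⟨l₀, hl₀, hb⟩ := h ⟨1, K.one_mem, rfl⟩
  simp only at hb
  rintro x ⟨k, hk, rfl⟩
  refine ⟨l₀⁻¹ * k, K.mul_mem (K.inv_mem hl₀) hk, ?_⟩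
  simp only
  have : a = b * l₀ := by rw [hb]; group
  rw [this]; group

/-- If a group `Γ` has no infinite strictly decreasing sequence of
subgroups, then every descending sequence of left cosets of subgroups of `Γ` has
nonempty intersection. -/
theorem descending_cosets_nonempty_inter
    {Γ : Type*} [Group Γ]
    (hdcc : ¬ ∃ H : ℕ → Subgroup Γ, ∀ n, H (n + 1) < H n)
    (C : ℕ → Set Γ)
    (hcoset : ∀ n, ∃ (γ : Γ) (H : Subgroup Γ), C n = (fun h => γ * h) '' (H : Set Γ))
    (hne : ∀ n, (C n).Nonempty)
    (hdesc : ∀ n, C (n + 1) ⊆ C n) :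
    (⋂ n, C n).Nonempty := by
  classical
  choose γ H hCH using hcoset
  -- C is antitone
  have hdesc' : ∀ m n, m ≤ n → C n ⊆ C m := by
    intro m n hmn
    induction hmn with
    | refl => exact le_refl _
    | step h ih => exact (hdesc _).trans ih
  -- H is antitone
  have hHle : ∀ m n, m ≤ n → H n ≤ H m := by
    intro m n hmn
    apply coset_subset_le (γ n) (γ m)
    rw [← hCH, ← hCH]
    exact hdesc' m n hmn
  -- H stabilizes
  have hstab : ∃ N, ∀ n, N ≤ n → H n = H N := by
    by_contra hcon
    push_neg at hcon
    have hcon' : ∀ N, ∃ n, N < n ∧ H n < H N := by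
      intro N
      obtain ⟨n, hn, hne⟩ := hcon N
      exact ⟨n, lt_of_le_of_ne hn (by rintro rfl; exact hne rfl),
        lt_of_le_of_ne (hHle N n hn) hne⟩
    let f : ℕ → ℕ := fun k => Nat.rec 0 (fun _ m => Classical.choose (hcon' m)) k
    apply hdcc
    refine ⟨fun k => H (f k), fun k => ?_⟩
    exact (Classical.choose_spec (hcon' (f k))).2
  obtain ⟨N, hN⟩ := hstab
  refine ⟨γ N, Set.mem_iInter.2 fun n => ?_⟩
  have hγN : γ N ∈ C N := by rw [hCH]; exact ⟨1, (H N).one_mem, by simp⟩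
  rcases le_or_gt n N with h | h
  · exact hdesc' n N h hγN
  · have hsub : C n ⊆ C N := hdesc' N n h.le
    have e : C n = (fun h => γ n * h) '' ((H N : Set Γ)) := by
      rw [hCH, hN n h.le]
    have : C n = C N := by
      rw [e, hCH N]
      exact coset_subset_eq _ _ _ (by rw [← e, ← hCH]; exact hsub)
    rw [this]
    exact hγN
end
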